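/- arXiv:1505.00769 — 9 statements merged into one kernel-verified Lean document; each statement's English description precedes it below -/
import Mathlib

section
/- Maximal correlation tensorizes: if the pairs (X₁,Y₁) and (X₂,Y₂) are independent (all finitely valued), then ρ_m((X₁,X₂); (Y₁,Y₂)) = max{ρ_m(X₁;Y₁), ρ_m(X₂;Y₂)}. -/
open Finset Real

noncomputable def fexp {Ω : Type*} [Fintype Ω] (w : Ω → ℝ) (f : Ω → ℝ) : ℝ :=
  ∑ ω, w ω * f ω

def IsProbWeight {Ω : Type*} [Fintype Ω] (w : Ω → ℝ) : Prop :=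
  (∀ ω, 0 ≤ w ω) ∧ ∑ ω, w ω = 1

noncomputable def maxCorr {Ω A B : Type*} [Fintype Ω] (w : Ω → ℝ)
    (X : Ω → A) (Y : Ω → B) : ℝ :=
  sSup { r : ℝ | ∃ f : A → ℝ, ∃ g : B → ℝ,
    fexp w (fun ω => f (X ω)) = 0 ∧ fexp w (fun ω => g (Y ω)) = 0 ∧
    fexp w (fun ω => (f (X ω))^2) ≤ 1 ∧ fexp w (fun ω => (g (Y ω))^2) ≤ 1 ∧
    r = fexp w (fun ω => f (X ω) * g (Y ω)) }

namespace MCaux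

variable {Ω A B : Type*} [Fintype Ω]

def corrSet (w : Ω → ℝ) (X : Ω → A) (Y : Ω → B) : Set ℝ :=
  { r : ℝ | ∃ f : A → ℝ, ∃ g : B → ℝ,
    fexp w (fun ω => f (X ω)) = 0 ∧ fexp w (fun ω => g (Y ω)) = 0 ∧
    fexp w (fun ω => (f (X ω))^2) ≤ 1 ∧ fexp w (fun ω => (g (Y ω))^2) ≤ 1 ∧
    r = fexp w (fun ω => f (X ω) * g (Y ω)) }

lemma maxCorr_eq (w : Ω → ℝ) (X : Ω → A) (Y : Ω → B) :
    maxCorr w X Y = sSup (corrSet w X Y) := rfl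

lemma fexp_nonneg {w : Ω → ℝ} (hw : ∀ ω, 0 ≤ w ω) {f : Ω → ℝ} (hf : ∀ ω, 0 ≤ f ω) :
    0 ≤ fexp w f :=
  Finset.sum_nonneg fun ω _ => mul_nonneg (hw ω) (hf ω)

/-- Weighted Cauchy–Schwarz. -/
lemma weightedCS {w : Ω → ℝ} (hw : ∀ ω, 0 ≤ w ω) (u v : Ω → ℝ) :
    fexp w (fun ω => u ω * v ω) ≤
      Real.sqrt (fexp w (fun ω => (u ω)^2)) * Real.sqrt (fexp w (fun ω => (v ω)^2)) := by
  have h1 : fexp w (fun ω => u ω * v ω)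
      = ∑ ω, (Real.sqrt (w ω) * u ω) * (Real.sqrt (w ω) * v ω) := by
    refine Finset.sum_congr rfl fun ω _ => ?_
    have h : Real.sqrt (w ω) * Real.sqrt (w ω) = w ω := Real.mul_self_sqrt (hw ω)
    show w ω * (u ω * v ω) = (Real.sqrt (w ω) * u ω) * (Real.sqrt (w ω) * v ω)
    calc w ω * (u ω * v ω) = (Real.sqrt (w ω) * Real.sqrt (w ω)) * (u ω * v ω) := by rw [h]
      _ = (Real.sqrt (w ω) * u ω) * (Real.sqrt (w ω) * v ω) := by ring
  have h2 : ∀ (t : Ω → ℝ), ∑ ω, (Real.sqrt (w ω) * t ω)^2 = fexp w (fun ω => (t ω)^2) := by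
    intro t
    refine Finset.sum_congr rfl fun ω _ => ?_
    have h : Real.sqrt (w ω) * Real.sqrt (w ω) = w ω := Real.mul_self_sqrt (hw ω)
    show (Real.sqrt (w ω) * t ω)^2 = w ω * (t ω)^2
    calc (Real.sqrt (w ω) * t ω)^2 = (Real.sqrt (w ω) * Real.sqrt (w ω)) * (t ω)^2 := by ring
      _ = w ω * (t ω)^2 := by rw [h]
  rw [h1, ← h2 u, ← h2 v]
  exact Real.sum_mul_le_sqrt_mul_sqrt _ _ _

lemma corrSet_bddAbove {w : Ω → ℝ} (hw : IsProbWeight w) (X : Ω → A) (Y : Ω → B) :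
    BddAbove (corrSet w X Y) := by
  refine ⟨1, ?_⟩
  rintro r ⟨f, g, hf0, hg0, hf2, hg2, rfl⟩
  have h := weightedCS hw.1 (fun ω => f (X ω)) (fun ω => g (Y ω))
  have s1 : Real.sqrt (fexp w (fun ω => (f (X ω))^2)) ≤ 1 := by
    rw [show (1:ℝ) = Real.sqrt 1 by simp]
    exact Real.sqrt_le_sqrt hf2
  have s2 : Real.sqrt (fexp w (fun ω => (g (Y ω))^2)) ≤ 1 := by
    rw [show (1:ℝ) = Real.sqrt 1 by simp]
    exact Real.sqrt_le_sqrt hg2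
  calc fexp w (fun ω => f (X ω) * g (Y ω)) ≤ _ := h
    _ ≤ 1 * 1 := mul_le_mul s1 s2 (Real.sqrt_nonneg _) zero_le_one
    _ = 1 := by ring

lemma zero_mem_corrSet (w : Ω → ℝ) (X : Ω → A) (Y : Ω → B) :
    (0 : ℝ) ∈ corrSet w X Y :=
  ⟨0, 0, by simp [fexp], by simp [fexp], by simp [fexp], by simp [fexp], by simp [fexp]⟩

lemma maxCorr_nonneg {w : Ω → ℝ} (hw : IsProbWeight w) (X : Ω → A) (Y : Ω → B) :
    0 ≤ maxCorr w X Y :=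
  le_csSup (corrSet_bddAbove hw X Y) (zero_mem_corrSet w X Y)

lemma fexp_const_mul (w : Ω → ℝ) (c : ℝ) (f : Ω → ℝ) :
    fexp w (fun ω => c * f ω) = c * fexp w f := by
  simp only [fexp, Finset.mul_sum]
  exact Finset.sum_congr rfl fun ω _ => by ring

/-- Key normalization lemma: correlation is bounded by maxCorr times the standard deviations. -/
lemma corr_le {w : Ω → ℝ} (hw : IsProbWeight w) (X : Ω → A) (Y : Ω → B)
    (f : A → ℝ) (g : B → ℝ)
    (hf0 : fexp w (fun ω => f (X ω)) = 0) (hg0 : fexp w (fun ω => g (Y ω)) = 0) :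
    fexp w (fun ω => f (X ω) * g (Y ω)) ≤
      maxCorr w X Y *
        (Real.sqrt (fexp w (fun ω => (f (X ω))^2)) *
         Real.sqrt (fexp w (fun ω => (g (Y ω))^2))) := by
  set s := fexp w (fun ω => (f (X ω))^2) with hs
  set t := fexp w (fun ω => (g (Y ω))^2) with ht
  have hs0 : 0 ≤ s := fexp_nonneg hw.1 fun ω => sq_nonneg _
  have ht0 : 0 ≤ t := fexp_nonneg hw.1 fun ω => sq_nonneg _
  by_cases hps : s = 0
  · have hterm : ∀ ω ∈ Finset.univ, w ω * (f (X ω))^2 = 0 := by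
      rw [← Finset.sum_eq_zero_iff_of_nonneg fun ω _ => mul_nonneg (hw.1 ω) (sq_nonneg _)]
      exact hps
    have hz : fexp w (fun ω => f (X ω) * g (Y ω)) = 0 := by
      refine Finset.sum_eq_zero fun ω _ => ?_
      rcases mul_eq_zero.1 (hterm ω (Finset.mem_univ ω)) with h | h
      · simp [h]
      · have : f (X ω) = 0 := by
          have := sq_eq_zero_iff.mp h
          exact this
        simp [this]
    rw [hz, hps]
    simp
  · by_cases hpt : t = 0
    · have hterm : ∀ ω ∈ Finset.univ, w ω * (g (Y ω))^2 = 0 := by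
        rw [← Finset.sum_eq_zero_iff_of_nonneg fun ω _ => mul_nonneg (hw.1 ω) (sq_nonneg _)]
        exact hpt
      have hz : fexp w (fun ω => f (X ω) * g (Y ω)) = 0 := by
        refine Finset.sum_eq_zero fun ω _ => ?_
        rcases mul_eq_zero.1 (hterm ω (Finset.mem_univ ω)) with h | h
        · simp [h]
        · have : g (Y ω) = 0 := sq_eq_zero_iff.mp h
          simp [this]
      rw [hz, hpt]
      simp
    · -- s, t > 0
      have hspos : 0 < s := lt_of_le_of_ne hs0 (Ne.symm hps)
      have htpos : 0 < t := lt_of_le_of_ne ht0 (Ne.symm hpt)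
      set p := Real.sqrt s with hp
      set q := Real.sqrt t with hq
      have hppos : 0 < p := Real.sqrt_pos.2 hspos
      have hqpos : 0 < q := Real.sqrt_pos.2 htpos
      have hpsq : p * p = s := Real.mul_self_sqrt hs0
      have hqsq : q * q = t := Real.mul_self_sqrt ht0
      have hmem : fexp w (fun ω => (p⁻¹ * f (X ω)) * (q⁻¹ * g (Y ω))) ∈ corrSet w X Y := by
        refine ⟨fun a => p⁻¹ * f a, fun b => q⁻¹ * g b, ?_, ?_, ?_, ?_, rfl⟩
        · rw [fexp_const_mul w p⁻¹ (fun ω => f (X ω)), hf0, mul_zero]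
        · rw [fexp_const_mul w q⁻¹ (fun ω => g (Y ω)), hg0, mul_zero]
        · have he : (fun ω => (p⁻¹ * f (X ω))^2) = fun ω => p⁻¹^2 * (f (X ω))^2 := by
            funext ω; ring
          rw [he, fexp_const_mul w (p⁻¹^2) (fun ω => (f (X ω))^2), ← hs]
          rw [show p⁻¹^2 * s = 1 by field_simp; nlinarith [hpsq]]
        · have he : (fun ω => (q⁻¹ * g (Y ω))^2) = fun ω => q⁻¹^2 * (g (Y ω))^2 := by
            funext ω; ring
          rw [he, fexp_const_mul w (q⁻¹^2) (fun ω => (g (Y ω))^2), ← ht]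
          rw [show q⁻¹^2 * t = 1 by field_simp; nlinarith [hqsq]]
      have hle : fexp w (fun ω => (p⁻¹ * f (X ω)) * (q⁻¹ * g (Y ω))) ≤ maxCorr w X Y :=
        le_csSup (corrSet_bddAbove hw X Y) hmem
      have heq : fexp w (fun ω => (p⁻¹ * f (X ω)) * (q⁻¹ * g (Y ω)))
          = (p⁻¹ * q⁻¹) * fexp w (fun ω => f (X ω) * g (Y ω)) := by
        rw [← fexp_const_mul w (p⁻¹ * q⁻¹) (fun ω => f (X ω) * g (Y ω))]
        congr 1
        funext ω; ring
      rw [heq] at hle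
      have hmul := mul_le_mul_of_nonneg_right hle (le_of_lt (mul_pos hppos hqpos))
      calc fexp w (fun ω => f (X ω) * g (Y ω))
          = (p⁻¹ * q⁻¹) * fexp w (fun ω => f (X ω) * g (Y ω)) * (p * q) := by
            field_simp
        _ ≤ maxCorr w X Y * (p * q) := hmul

lemma fexp_prod {Ω₁ Ω₂ : Type*} [Fintype Ω₁] [Fintype Ω₂]
    (w₁ : Ω₁ → ℝ) (w₂ : Ω₂ → ℝ) (φ : Ω₁ → Ω₂ → ℝ) :
    fexp (fun p : Ω₁ × Ω₂ => w₁ p.1 * w₂ p.2) (fun p => φ p.1 p.2)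
      = ∑ ω₁, w₁ ω₁ * (∑ ω₂, w₂ ω₂ * φ ω₁ ω₂) := by
  simp only [fexp, Fintype.sum_prod_type, Finset.mul_sum]
  exact Finset.sum_congr rfl fun ω₁ _ => Finset.sum_congr rfl fun ω₂ _ => by ring

end MCaux

open MCaux in
theorem maxCorr_tensorize {Ω₁ Ω₂ A₁ B₁ A₂ B₂ : Type*}
    [Fintype Ω₁] [Fintype Ω₂] [Fintype A₁] [Fintype B₁] [Fintype A₂] [Fintype B₂]
    (w₁ : Ω₁ → ℝ) (w₂ : Ω₂ → ℝ) (h₁ : IsProbWeight w₁) (h₂ : IsProbWeight w₂)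
    (X₁ : Ω₁ → A₁) (Y₁ : Ω₁ → B₁) (X₂ : Ω₂ → A₂) (Y₂ : Ω₂ → B₂) :
    maxCorr (fun p : Ω₁ × Ω₂ => w₁ p.1 * w₂ p.2)
      (fun p => (X₁ p.1, X₂ p.2)) (fun p => (Y₁ p.1, Y₂ p.2))
    = max (maxCorr w₁ X₁ Y₁) (maxCorr w₂ X₂ Y₂) := by
  have hWprob : IsProbWeight (fun p : Ω₁ × Ω₂ => w₁ p.1 * w₂ p.2) := by
    refine ⟨fun p => mul_nonneg (h₁.1 p.1) (h₂.1 p.2), ?_⟩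
    rw [Fintype.sum_prod_type]
    calc ∑ ω₁, ∑ ω₂, w₁ ω₁ * w₂ ω₂ = ∑ ω₁, w₁ ω₁ * ∑ ω₂, w₂ ω₂ := by
          exact Finset.sum_congr rfl fun ω₁ _ => (Finset.mul_sum _ _ _).symm
      _ = 1 := by rw [h₂.2]; simpa using h₁.2
  have key1 : ∀ φ : Ω₁ → ℝ,
      fexp (fun p : Ω₁ × Ω₂ => w₁ p.1 * w₂ p.2) (fun p => φ p.1) = fexp w₁ φ := by
    intro φ
    rw [fexp_prod w₁ w₂ (fun ω₁ _ => φ ω₁)]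
    refine Finset.sum_congr rfl fun ω₁ _ => ?_
    rw [← Finset.sum_mul, h₂.2, one_mul]
  have key2 : ∀ φ : Ω₂ → ℝ,
      fexp (fun p : Ω₁ × Ω₂ => w₁ p.1 * w₂ p.2) (fun p => φ p.2) = fexp w₂ φ := by
    intro φ
    rw [fexp_prod w₁ w₂ (fun _ ω₂ => φ ω₂)]
    have hin : ∀ ω₁ : Ω₁, w₁ ω₁ * (∑ ω₂, w₂ ω₂ * φ ω₂) = (fexp w₂ φ) * w₁ ω₁ := by
      intro ω₁; rw [fexp]; ring
    rw [Finset.sum_congr rfl fun ω₁ _ => hin ω₁, ← Finset.mul_sum, h₁.2, mul_one]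
  rw [maxCorr_eq, maxCorr_eq w₁, maxCorr_eq w₂]
  apply le_antisymm
  · -- hard direction
    apply csSup_le ⟨0, zero_mem_corrSet _ _ _⟩
    rintro r ⟨f, g, hf0, hg0, hf2, hg2, rfl⟩
    set F : A₁ → ℝ := fun a => ∑ ω₂, w₂ ω₂ * f (a, X₂ ω₂) with hF
    set G : B₁ → ℝ := fun b => ∑ ω₂, w₂ ω₂ * g (b, Y₂ ω₂) with hG
    set u : A₁ → ℝ := fun a => Real.sqrt (∑ ω₂, w₂ ω₂ * (f (a, X₂ ω₂) - F a)^2) with hu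
    set v : B₁ → ℝ := fun b => Real.sqrt (∑ ω₂, w₂ ω₂ * (g (b, Y₂ ω₂) - G b)^2) with hv
    set ρ₁ := sSup (corrSet w₁ X₁ Y₁) with hρ₁
    set ρ₂ := sSup (corrSet w₂ X₂ Y₂) with hρ₂
    -- Step A: pointwise inner bound
    have stepA : ∀ (a : A₁) (b : B₁),
        ∑ ω₂, w₂ ω₂ * (f (a, X₂ ω₂) * g (b, Y₂ ω₂)) ≤ F a * G b + ρ₂ * (u a * v b) := by
      intro a b
      have hf'0 : fexp w₂ (fun ω => (f (a, X₂ ω) - F a)) = 0 := by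
        have : fexp w₂ (fun ω => (f (a, X₂ ω) - F a))
            = (∑ ω₂, w₂ ω₂ * f (a, X₂ ω₂)) - (∑ ω₂, w₂ ω₂) * F a := by
          simp only [fexp, mul_sub, Finset.sum_sub_distrib, Finset.sum_mul]
        rw [this, h₂.2, one_mul]
        exact sub_eq_zero.mpr rfl
      have hg'0 : fexp w₂ (fun ω => (g (b, Y₂ ω) - G b)) = 0 := by
        have : fexp w₂ (fun ω => (g (b, Y₂ ω) - G b))
            = (∑ ω₂, w₂ ω₂ * g (b, Y₂ ω₂)) - (∑ ω₂, w₂ ω₂) * G b := by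
          simp only [fexp, mul_sub, Finset.sum_sub_distrib, Finset.sum_mul]
        rw [this, h₂.2, one_mul]
        exact sub_eq_zero.mpr rfl
      have hcorr := corr_le h₂ X₂ Y₂ (fun x => f (a, x) - F a) (fun y => g (b, y) - G b)
        hf'0 hg'0
      rw [maxCorr_eq w₂ X₂ Y₂, ← hρ₂] at hcorr
      beta_reduce at hcorr
      have hueq : Real.sqrt (fexp w₂ (fun ω => (f (a, X₂ ω) - F a)^2)) = u a := rfl
      have hveq : Real.sqrt (fexp w₂ (fun ω => (g (b, Y₂ ω) - G b)^2)) = v b := rfl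
      rw [hueq, hveq] at hcorr
      have hexpand : ∑ ω₂, w₂ ω₂ * (f (a, X₂ ω₂) * g (b, Y₂ ω₂))
          = fexp w₂ (fun ω => (f (a, X₂ ω) - F a) * (g (b, Y₂ ω) - G b))
            + F a * (∑ ω₂, w₂ ω₂ * g (b, Y₂ ω₂))
            + G b * (∑ ω₂, w₂ ω₂ * f (a, X₂ ω₂))
            - F a * G b * (∑ ω₂, w₂ ω₂) := by
        simp only [fexp, ← Finset.sum_add_distrib, ← Finset.sum_sub_distrib,
          Finset.mul_sum]
        exact Finset.sum_congr rfl fun ω₂ _ => by ring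
      rw [hexpand, h₂.2]
      have hFa : (∑ ω₂, w₂ ω₂ * f (a, X₂ ω₂)) = F a := rfl
      have hGb : (∑ ω₂, w₂ ω₂ * g (b, Y₂ ω₂)) = G b := rfl
      rw [hFa, hGb]
      linarith [hcorr]
    -- moments of F, u
    have husq : ∀ a : A₁, (u a)^2 = (∑ ω₂, w₂ ω₂ * (f (a, X₂ ω₂))^2) - (F a)^2 := by
      intro a
      have h0 : 0 ≤ ∑ ω₂, w₂ ω₂ * (f (a, X₂ ω₂) - F a)^2 :=
        Finset.sum_nonneg fun ω₂ _ => mul_nonneg (h₂.1 ω₂) (sq_nonneg _)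
      have hua : u a = Real.sqrt (∑ ω₂, w₂ ω₂ * (f (a, X₂ ω₂) - F a)^2) := rfl
      rw [hua, Real.sq_sqrt h0]
      have hexp : ∑ ω₂, w₂ ω₂ * (f (a, X₂ ω₂) - F a)^2
          = (∑ ω₂, w₂ ω₂ * (f (a, X₂ ω₂))^2)
            - 2 * F a * (∑ ω₂, w₂ ω₂ * f (a, X₂ ω₂))
            + (F a)^2 * (∑ ω₂, w₂ ω₂) := by
        simp only [← Finset.sum_add_distrib, ← Finset.sum_sub_distrib, Finset.mul_sum]
        exact Finset.sum_congr rfl fun ω₂ _ => by ring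
      rw [hexp, h₂.2]
      have hFa : (∑ ω₂, w₂ ω₂ * f (a, X₂ ω₂)) = F a := rfl
      rw [hFa]
      ring
    have hvsq : ∀ b : B₁, (v b)^2 = (∑ ω₂, w₂ ω₂ * (g (b, Y₂ ω₂))^2) - (G b)^2 := by
      intro b
      have h0 : 0 ≤ ∑ ω₂, w₂ ω₂ * (g (b, Y₂ ω₂) - G b)^2 :=
        Finset.sum_nonneg fun ω₂ _ => mul_nonneg (h₂.1 ω₂) (sq_nonneg _)
      have hvb : v b = Real.sqrt (∑ ω₂, w₂ ω₂ * (g (b, Y₂ ω₂) - G b)^2) := rfl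
      rw [hvb, Real.sq_sqrt h0]
      have hexp : ∑ ω₂, w₂ ω₂ * (g (b, Y₂ ω₂) - G b)^2
          = (∑ ω₂, w₂ ω₂ * (g (b, Y₂ ω₂))^2)
            - 2 * G b * (∑ ω₂, w₂ ω₂ * g (b, Y₂ ω₂))
            + (G b)^2 * (∑ ω₂, w₂ ω₂) := by
        simp only [← Finset.sum_add_distrib, ← Finset.sum_sub_distrib, Finset.mul_sum]
        exact Finset.sum_congr rfl fun ω₂ _ => by ring
      rw [hexp, h₂.2]
      have hGb : (∑ ω₂, w₂ ω₂ * g (b, Y₂ ω₂)) = G b := rfl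
      rw [hGb]
      ring
    -- moment bounds
    have hf2' : ∑ ω₁, w₁ ω₁ * (∑ ω₂, w₂ ω₂ * (f (X₁ ω₁, X₂ ω₂))^2) ≤ 1 := by
      rw [← fexp_prod w₁ w₂ (fun ω₁ ω₂ => (f (X₁ ω₁, X₂ ω₂))^2)]
      exact hf2
    have hg2' : ∑ ω₁, w₁ ω₁ * (∑ ω₂, w₂ ω₂ * (g (Y₁ ω₁, Y₂ ω₂))^2) ≤ 1 := by
      rw [← fexp_prod w₁ w₂ (fun ω₁ ω₂ => (g (Y₁ ω₁, Y₂ ω₂))^2)]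
      exact hg2
    have hmomF : fexp w₁ (fun ω => (F (X₁ ω))^2) + fexp w₁ (fun ω => (u (X₁ ω))^2) ≤ 1 := by
      have : fexp w₁ (fun ω => (F (X₁ ω))^2) + fexp w₁ (fun ω => (u (X₁ ω))^2)
          = ∑ ω₁, w₁ ω₁ * (∑ ω₂, w₂ ω₂ * (f (X₁ ω₁, X₂ ω₂))^2) := by
        simp only [fexp, ← Finset.sum_add_distrib]
        refine Finset.sum_congr rfl fun ω₁ _ => ?_
        rw [husq (X₁ ω₁)]
        ring
      rw [this]; exact hf2'
    have hmomG : fexp w₁ (fun ω => (G (Y₁ ω))^2) + fexp w₁ (fun ω => (v (Y₁ ω))^2) ≤ 1 := by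
      have : fexp w₁ (fun ω => (G (Y₁ ω))^2) + fexp w₁ (fun ω => (v (Y₁ ω))^2)
          = ∑ ω₁, w₁ ω₁ * (∑ ω₂, w₂ ω₂ * (g (Y₁ ω₁, Y₂ ω₂))^2) := by
        simp only [fexp, ← Finset.sum_add_distrib]
        refine Finset.sum_congr rfl fun ω₁ _ => ?_
        rw [hvsq (Y₁ ω₁)]
        ring
      rw [this]; exact hg2'
    -- F, G centered
    have hF0 : fexp w₁ (fun ω => F (X₁ ω)) = 0 := by
      have := fexp_prod w₁ w₂ (fun ω₁ ω₂ => f (X₁ ω₁, X₂ ω₂))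
      rw [this] at hf0
      exact hf0
    have hG0 : fexp w₁ (fun ω => G (Y₁ ω)) = 0 := by
      have := fexp_prod w₁ w₂ (fun ω₁ ω₂ => g (Y₁ ω₁, Y₂ ω₂))
      rw [this] at hg0
      exact hg0
    -- assemble
    set KA := Real.sqrt (fexp w₁ (fun ω => (F (X₁ ω))^2)) with hKA
    set KB := Real.sqrt (fexp w₁ (fun ω => (u (X₁ ω))^2)) with hKB
    set KC := Real.sqrt (fexp w₁ (fun ω => (G (Y₁ ω))^2)) with hKC
    set KD := Real.sqrt (fexp w₁ (fun ω => (v (Y₁ ω))^2)) with hKD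
    have hKA0 : 0 ≤ KA := Real.sqrt_nonneg _
    have hKB0 : 0 ≤ KB := Real.sqrt_nonneg _
    have hKC0 : 0 ≤ KC := Real.sqrt_nonneg _
    have hKD0 : 0 ≤ KD := Real.sqrt_nonneg _
    have hKAsq : KA^2 = fexp w₁ (fun ω => (F (X₁ ω))^2) :=
      Real.sq_sqrt (fexp_nonneg h₁.1 fun ω => sq_nonneg _)
    have hKBsq : KB^2 = fexp w₁ (fun ω => (u (X₁ ω))^2) :=
      Real.sq_sqrt (fexp_nonneg h₁.1 fun ω => sq_nonneg _)
    have hKCsq : KC^2 = fexp w₁ (fun ω => (G (Y₁ ω))^2) :=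
      Real.sq_sqrt (fexp_nonneg h₁.1 fun ω => sq_nonneg _)
    have hKDsq : KD^2 = fexp w₁ (fun ω => (v (Y₁ ω))^2) :=
      Real.sq_sqrt (fexp_nonneg h₁.1 fun ω => sq_nonneg _)
    have hterm1 : fexp w₁ (fun ω => F (X₁ ω) * G (Y₁ ω)) ≤ ρ₁ * (KA * KC) :=
      corr_le h₁ X₁ Y₁ F G hF0 hG0
    have hterm2 : fexp w₁ (fun ω => u (X₁ ω) * v (Y₁ ω)) ≤ KB * KD :=
      weightedCS h₁.1 _ _
    have hρ₁le : ρ₁ ≤ max ρ₁ ρ₂ := le_max_left _ _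
    have hρ₂le : ρ₂ ≤ max ρ₁ ρ₂ := le_max_right _ _
    have hρ0 : 0 ≤ max ρ₁ ρ₂ := le_trans (maxCorr_nonneg h₁ X₁ Y₁) hρ₁le
    have hAB : KA^2 + KB^2 ≤ 1 := by rw [hKAsq, hKBsq]; exact hmomF
    have hCD : KC^2 + KD^2 ≤ 1 := by rw [hKCsq, hKDsq]; exact hmomG
    have hACBD : KA * KC + KB * KD ≤ 1 := by
      nlinarith [sq_nonneg (KA - KC), sq_nonneg (KB - KD)]
    calc fexp (fun p : Ω₁ × Ω₂ => w₁ p.1 * w₂ p.2)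
          (fun p => f (X₁ p.1, X₂ p.2) * g (Y₁ p.1, Y₂ p.2))
        = ∑ ω₁, w₁ ω₁ * (∑ ω₂, w₂ ω₂ * (f (X₁ ω₁, X₂ ω₂) * g (Y₁ ω₁, Y₂ ω₂))) :=
          fexp_prod w₁ w₂ (fun ω₁ ω₂ => f (X₁ ω₁, X₂ ω₂) * g (Y₁ ω₁, Y₂ ω₂))
      _ ≤ ∑ ω₁, w₁ ω₁ * (F (X₁ ω₁) * G (Y₁ ω₁) + ρ₂ * (u (X₁ ω₁) * v (Y₁ ω₁))) :=
          Finset.sum_le_sum fun ω₁ _ =>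
            mul_le_mul_of_nonneg_left (stepA (X₁ ω₁) (Y₁ ω₁)) (h₁.1 ω₁)
      _ = fexp w₁ (fun ω => F (X₁ ω) * G (Y₁ ω))
            + ρ₂ * fexp w₁ (fun ω => u (X₁ ω) * v (Y₁ ω)) := by
          simp only [fexp, Finset.mul_sum, ← Finset.sum_add_distrib]
          exact Finset.sum_congr rfl fun ω₁ _ => by ring
      _ ≤ ρ₁ * (KA * KC) + ρ₂ * (KB * KD) := by
          have h2' : ρ₂ * fexp w₁ (fun ω => u (X₁ ω) * v (Y₁ ω)) ≤ ρ₂ * (KB * KD) := by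
            rcases le_or_gt 0 ρ₂ with h | h
            · exact mul_le_mul_of_nonneg_left hterm2 h
            · exact absurd h (not_lt.2 (maxCorr_nonneg h₂ X₂ Y₂))
          linarith [hterm1]
      _ ≤ max ρ₁ ρ₂ * (KA * KC) + max ρ₁ ρ₂ * (KB * KD) :=
          add_le_add
            (mul_le_mul_of_nonneg_right hρ₁le (mul_nonneg hKA0 hKC0))
            (mul_le_mul_of_nonneg_right hρ₂le (mul_nonneg hKB0 hKD0))
      _ = max ρ₁ ρ₂ * (KA * KC + KB * KD) := by ring
      _ ≤ max ρ₁ ρ₂ * 1 := mul_le_mul_of_nonneg_left hACBD hρ0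
      _ = max ρ₁ ρ₂ := mul_one _
  · -- easy direction
    apply max_le
    · apply csSup_le_csSup
        (corrSet_bddAbove hWprob (fun p => (X₁ p.1, X₂ p.2)) (fun p => (Y₁ p.1, Y₂ p.2)))
        ⟨0, zero_mem_corrSet _ _ _⟩
      rintro r ⟨f, g, hf0, hg0, hf2, hg2, rfl⟩
      refine ⟨fun a => f a.1, fun b => g b.1, ?_, ?_, ?_, ?_, ?_⟩
      · exact (key1 (fun ω => f (X₁ ω))).trans hf0
      · exact (key1 (fun ω => g (Y₁ ω))).trans hg0
      · exact le_of_eq_of_le (key1 fun ω => (f (X₁ ω))^2) hf2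
      · exact le_of_eq_of_le (key1 fun ω => (g (Y₁ ω))^2) hg2
      · exact (key1 (fun ω => f (X₁ ω) * g (Y₁ ω))).symm
    · apply csSup_le_csSup
        (corrSet_bddAbove hWprob (fun p => (X₁ p.1, X₂ p.2)) (fun p => (Y₁ p.1, Y₂ p.2)))
        ⟨0, zero_mem_corrSet _ _ _⟩
      rintro r ⟨f, g, hf0, hg0, hf2, hg2, rfl⟩
      refine ⟨fun a => f a.2, fun b => g b.2, ?_, ?_, ?_, ?_, ?_⟩
      · exact (key2 (fun ω => f (X₂ ω))).trans hf0
      · exact (key2 (fun ω => g (Y₂ ω))).trans hg0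
      · exact le_of_eq_of_le (key2 fun ω => (f (X₂ ω))^2) hf2
      · exact le_of_eq_of_le (key2 fun ω => (g (Y₂ ω))^2) hg2
      · exact (key2 (fun ω => f (X₂ ω) * g (Y₂ ω))).symm
end

section
/- If either X or Y is binary-valued (all probabilities of X-values and Y-values strictly positive), then ρ_m(X;Y)² = -1 + Σ_{a,b} p_{X,Y}(a,b)² / (p_X(a) p_Y(b)). -/
open Finset Real

/-! On a two-point space every mean-zero `f` is a multiple `c • φ` of the standardized indicator
`φ`, and `E f² = c²`. Hence `E[f(X) g(Y)] = c · ∑_b g(b) k(b)` with `k(b) = ∑_a J(a,b) φ(a)`, so by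
Cauchy–Schwarz in `L²(q)` the supremum is `√(∑_b k(b)² / q(b))`, attained at `f = φ` and
`g ∝ k / q`. Since `{1, φ}` is an orthonormal basis of `L²(p)`, Parseval gives
`∑_a J(a,b)² / p(a) = q(b)² + k(b)²`; dividing by `q(b)` and summing over `b` yields the
chi-square expression. -/

noncomputable def law {Ω C : Type*} [Fintype Ω] [DecidableEq C] (w : Ω → ℝ) (Z : Ω → C)
    (c : C) : ℝ :=
  ∑ ω, if Z ω = c then w ω else 0

noncomputable def jointLaw {Ω A B : Type*} [Fintype Ω] [DecidableEq A] [DecidableEq B]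
    (w : Ω → ℝ) (X : Ω → A) (Y : Ω → B) (a : A) (b : B) : ℝ :=
  ∑ ω, if X ω = a ∧ Y ω = b then w ω else 0

section Law

variable {Ω A B : Type*} [Fintype Ω] [DecidableEq A] [DecidableEq B]

lemma fexp_comp [Fintype A] (w : Ω → ℝ) (X : Ω → A) (F : A → ℝ) :
    fexp w (fun ω => F (X ω)) = ∑ a, law w X a * F a := by
  simp only [fexp, law, Finset.sum_mul, ite_mul, zero_mul]
  rw [Finset.sum_comm]
  simp

lemma fexp_comp₂ [Fintype A] [Fintype B] (w : Ω → ℝ) (X : Ω → A) (Y : Ω → B)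
    (F : A → B → ℝ) :
    fexp w (fun ω => F (X ω) (Y ω)) = ∑ a, ∑ b, jointLaw w X Y a b * F a b := by
  simp only [fexp, jointLaw, Finset.sum_mul, ite_mul, zero_mul]
  calc _ = ∑ ω, ∑ a, ∑ b, if X ω = a ∧ Y ω = b then w ω * F a b else 0 := by simp [ite_and]
    _ = _ := by rw [Finset.sum_comm]; exact Finset.sum_congr rfl fun a _ => Finset.sum_comm

lemma sum_law [Fintype A] (w : Ω → ℝ) (X : Ω → A) : ∑ a, law w X a = ∑ ω, w ω := by
  simp only [law]
  rw [Finset.sum_comm]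
  simp

lemma sum_jointLaw_right [Fintype B] (w : Ω → ℝ) (X : Ω → A) (Y : Ω → B) (a : A) :
    ∑ b, jointLaw w X Y a b = law w X a := by
  simp only [jointLaw, law]
  rw [Finset.sum_comm]
  simp [ite_and]

lemma sum_jointLaw_left [Fintype A] (w : Ω → ℝ) (X : Ω → A) (Y : Ω → B) (b : B) :
    ∑ a, jointLaw w X Y a b = law w Y b := by
  simp only [jointLaw, law]
  rw [Finset.sum_comm]
  simp [ite_and]

end Law

noncomputable def stdIndicator (p : Bool → ℝ) (a : Bool) : ℝ :=
  ((bif a then 1 else 0) - p true) / √(p false * p true)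

section Binary

variable {p : Bool → ℝ}

lemma sq_sqrt_mul_pos (hp : ∀ a, 0 < p a) :
    √(p false * p true) ^ 2 = p false * p true ∧ 0 < √(p false * p true) :=
  ⟨Real.sq_sqrt (mul_pos (hp false) (hp true)).le, Real.sqrt_pos.2 (mul_pos (hp false) (hp true))⟩

lemma sum_mul_stdIndicator (hp : ∀ a, 0 < p a) (hp1 : ∑ a, p a = 1) :
    ∑ a, p a * stdIndicator p a = 0 := by
  rw [Fintype.sum_bool] at hp1 ⊢
  simp only [stdIndicator, cond_true, cond_false]
  obtain ⟨-, hr⟩ := sq_sqrt_mul_pos hp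
  generalize √(p false * p true) = r at *
  field_simp
  linear_combination -(p true) * hp1

lemma sum_mul_stdIndicator_sq (hp : ∀ a, 0 < p a) (hp1 : ∑ a, p a = 1) :
    ∑ a, p a * stdIndicator p a ^ 2 = 1 := by
  rw [Fintype.sum_bool] at hp1 ⊢
  simp only [stdIndicator, cond_true, cond_false, div_pow, (sq_sqrt_mul_pos hp).1]
  have := hp false
  have := hp true
  field_simp
  linear_combination p true * (p true - 1) * hp1

lemma exists_eq_mul_stdIndicator (hp : ∀ a, 0 < p a) (hp1 : ∑ a, p a = 1) {f : Bool → ℝ}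
    (hf : ∑ a, p a * f a = 0) : ∃ c, ∀ a, f a = c * stdIndicator p a := by
  rw [Fintype.sum_bool] at hp1 hf
  have := hp false
  obtain ⟨-, hr⟩ := sq_sqrt_mul_pos hp
  refine ⟨f true * √(p false * p true) / p false, fun a => ?_⟩
  simp only [stdIndicator]
  generalize √(p false * p true) = r at *
  cases a <;> simp only [cond_true, cond_false] <;> field_simp
  · linear_combination hf
  · linear_combination f true * hp1

lemma sum_sq_div_eq_sq_sum_add_sq_sum_mul_stdIndicator (hp : ∀ a, 0 < p a)
    (hp1 : ∑ a, p a = 1) (v : Bool → ℝ) :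
    ∑ a, v a ^ 2 / p a = (∑ a, v a) ^ 2 + (∑ a, v a * stdIndicator p a) ^ 2 := by
  rw [Fintype.sum_bool] at hp1
  simp only [Fintype.sum_bool, stdIndicator, cond_true, cond_false]
  obtain ⟨hr2, hr⟩ := sq_sqrt_mul_pos hp
  generalize √(p false * p true) = r at *
  have := hp false
  have := hp true
  field_simp
  rw [hr2]
  linear_combination p false * p true *
    (v true ^ 2 * (1 - p true) - 2 * v true * v false * p true - p true * v false ^ 2) * hp1

end Binary

def corrSet {A B : Type*} [Fintype A] [Fintype B] (p : A → ℝ) (q : B → ℝ) (J : A → B → ℝ) :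
    Set ℝ :=
  {r | ∃ f : A → ℝ, ∃ g : B → ℝ, ∑ a, p a * f a = 0 ∧ ∑ b, q b * g b = 0 ∧
    ∑ a, p a * f a ^ 2 ≤ 1 ∧ ∑ b, q b * g b ^ 2 ≤ 1 ∧ r = ∑ a, ∑ b, J a b * (f a * g b)}

lemma maxCorr_eq_sSup_corrSet {Ω A B : Type*} [Fintype Ω] [Fintype A] [Fintype B]
    [DecidableEq A] [DecidableEq B] (w : Ω → ℝ) (X : Ω → A) (Y : Ω → B) :
    maxCorr w X Y = sSup (corrSet (law w X) (law w Y) (jointLaw w X Y)) := by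
  refine congrArg sSup (Set.ext fun r => exists_congr fun f => exists_congr fun g => ?_)
  rw [fexp_comp w X f, fexp_comp w Y g, fexp_comp w X (f · ^ 2), fexp_comp w Y (g · ^ 2),
    fexp_comp₂ w X Y (fun a b => f a * g b)]

lemma sum_sum_mul_mul_eq_sum_mul_sum {A B : Type*} [Fintype A] [Fintype B]
    (J : A → B → ℝ) (f : A → ℝ) (g : B → ℝ) :
    ∑ a, ∑ b, J a b * (f a * g b) = ∑ b, g b * ∑ a, J a b * f a := by
  rw [Finset.sum_comm]
  simp only [Finset.mul_sum]
  exact Finset.sum_congr rfl fun b _ => Finset.sum_congr rfl fun a _ => by ring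

section BinaryCorr

variable {B : Type*} [Fintype B] {p : Bool → ℝ} {q : B → ℝ} {J : Bool → B → ℝ}

lemma le_sqrt_of_mem_corrSet (hp : ∀ a, 0 < p a) (hp1 : ∑ a, p a = 1) (hq : ∀ b, 0 < q b)
    {r : ℝ} (hr : r ∈ corrSet p q J) :
    r ≤ √(∑ b, (∑ a, J a b * stdIndicator p a) ^ 2 / q b) := by
  obtain ⟨f, g, hf0, -, hf2, hg2, rfl⟩ := hr
  obtain ⟨c, hc⟩ := exists_eq_mul_stdIndicator hp hp1 hf0
  have hc2 : c ^ 2 ≤ 1 := by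
    simpa only [hc, mul_pow, mul_left_comm (p _), ← Finset.mul_sum,
      sum_mul_stdIndicator_sq hp hp1, mul_one] using hf2
  have hcs : (∑ b, g b * ∑ a, J a b * stdIndicator p a) ^ 2 ≤
      ∑ b, (∑ a, J a b * stdIndicator p a) ^ 2 / q b := by
    refine (Finset.sum_sq_le_sum_mul_sum_of_sq_le_mul _ (fun b _ => ?_) (fun b _ => ?_)
      (fun b _ => ?_)).trans (mul_le_of_le_one_left ?_ hg2)
    · exact mul_nonneg (hq b).le (sq_nonneg _)
    · exact div_nonneg (sq_nonneg _) (hq b).le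
    · have := (hq b).ne'
      exact le_of_eq (by field_simp)
    · exact Finset.sum_nonneg fun b _ => div_nonneg (sq_nonneg _) (hq b).le
  have hr : ∑ a, ∑ b, J a b * (f a * g b) = c * ∑ b, g b * ∑ a, J a b * stdIndicator p a := by
    simp only [sum_sum_mul_mul_eq_sum_mul_sum, hc, mul_left_comm _ c, ← Finset.mul_sum]
  rw [hr]
  refine (le_abs_self _).trans (Real.abs_le_sqrt ?_)
  rw [mul_pow]
  exact (mul_le_of_le_one_left (sq_nonneg _) hc2).trans hcs

lemma sqrt_mem_corrSet (hp : ∀ a, 0 < p a) (hp1 : ∑ a, p a = 1) (hq : ∀ b, 0 < q b)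
    (hJp : ∀ a, ∑ b, J a b = p a) :
    √(∑ b, (∑ a, J a b * stdIndicator p a) ^ 2 / q b) ∈ corrSet p q J := by
  set k := fun b => ∑ a, J a b * stdIndicator p a with hk
  set N := √(∑ b, k b ^ 2 / q b)
  have hN : N ^ 2 = ∑ b, k b ^ 2 / q b :=
    Real.sq_sqrt (Finset.sum_nonneg fun b _ => div_nonneg (sq_nonneg _) (hq b).le)
  have hg : ∀ b, q b * (k b / (q b * N)) = k b / N := fun b => by
    have := (hq b).ne'
    field_simp
  -- If `N = 0`, the junk value `x / 0 = 0` makes `g = 0`, which is still admissible.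
  refine ⟨stdIndicator p, fun b => k b / (q b * N), sum_mul_stdIndicator hp hp1, ?_,
    (sum_mul_stdIndicator_sq hp hp1).le, ?_, ?_⟩
  · have hk0 : ∑ b, k b = 0 := by
      rw [hk, Finset.sum_comm]
      simp only [← Finset.sum_mul, hJp, sum_mul_stdIndicator hp hp1]
    simp only [hg, ← Finset.sum_div, hk0, zero_div]
  · calc ∑ b, q b * (k b / (q b * N)) ^ 2 = (∑ b, k b ^ 2 / q b) / N ^ 2 := by
          rw [Finset.sum_div]
          refine Finset.sum_congr rfl fun b _ => ?_
          have := (hq b).ne'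
          field_simp
      _ ≤ 1 := by rw [hN]; exact div_self_le_one _
  · calc N = N ^ 2 / N := by rw [sq, mul_self_div_self]
      _ = ∑ b, k b / (q b * N) * k b := by
          rw [hN, Finset.sum_div]
          refine Finset.sum_congr rfl fun b _ => ?_
          have := (hq b).ne'
          field_simp
      _ = _ := (sum_sum_mul_mul_eq_sum_mul_sum _ _ _).symm

lemma neg_one_add_sum_sum_sq_div_eq (hp : ∀ a, 0 < p a) (hp1 : ∑ a, p a = 1)
    (hq1 : ∑ b, q b = 1) (hJq : ∀ b, ∑ a, J a b = q b) :
    -1 + ∑ a, ∑ b, J a b ^ 2 / (p a * q b) =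
      ∑ b, (∑ a, J a b * stdIndicator p a) ^ 2 / q b := by
  calc -1 + ∑ a, ∑ b, J a b ^ 2 / (p a * q b)
      = -1 + ∑ b, (∑ a, J a b ^ 2 / p a) / q b := by
        simp only [Finset.sum_div, div_div]
        rw [Finset.sum_comm]
    _ = -1 + ∑ b, (q b + (∑ a, J a b * stdIndicator p a) ^ 2 / q b) := by
        congr 1
        refine Finset.sum_congr rfl fun b _ => ?_
        rw [sum_sq_div_eq_sq_sum_add_sq_sum_mul_stdIndicator hp hp1, hJq, add_div, sq,
          mul_self_div_self]
    _ = _ := by rw [Finset.sum_add_distrib, hq1]; ring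

end BinaryCorr

theorem maxCorr_sq_binary {Ω B : Type*} [Fintype Ω] [Fintype B] [DecidableEq B]
    (w : Ω → ℝ) (hw : IsProbWeight w) (X : Ω → Bool) (Y : Ω → B)
    (hX : ∀ a : Bool, 0 < ∑ ω, if X ω = a then w ω else 0)
    (hY : ∀ b : B, 0 < ∑ ω, if Y ω = b then w ω else 0) :
    (maxCorr w X Y)^2 = -1 + ∑ a : Bool, ∑ b : B,
      (∑ ω, if X ω = a ∧ Y ω = b then w ω else 0)^2 /
      ((∑ ω, if X ω = a then w ω else 0) * (∑ ω, if Y ω = b then w ω else 0)) := by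
  have hp : ∀ a, 0 < law w X a := hX
  have hq : ∀ b, 0 < law w Y b := hY
  have hp1 : ∑ a, law w X a = 1 := (sum_law w X).trans hw.2
  have hmax : IsGreatest (corrSet (law w X) (law w Y) (jointLaw w X Y))
      √(∑ b, (∑ a, jointLaw w X Y a b * stdIndicator (law w X) a) ^ 2 / law w Y b) :=
    ⟨sqrt_mem_corrSet hp hp1 hq (sum_jointLaw_right w X Y),
      fun _ => le_sqrt_of_mem_corrSet hp hp1 hq⟩
  rw [maxCorr_eq_sSup_corrSet, hmax.csSup_eq,
    Real.sq_sqrt (Finset.sum_nonneg fun b _ => div_nonneg (sq_nonneg _) (hq b).le)]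
  exact (neg_one_add_sum_sum_sq_div_eq hp hp1 ((sum_law w Y).trans hw.2)
    (sum_jointLaw_left w X Y)).symm
end

section
/- The pointwise weighted AM-GM dual inequality: if p₁ ∈ (0,1) and p₂,...,p_k < 0 satisfy Σᵢ 1/pᵢ = 1, then for all positive reals x₁,...,x_k, Σᵢ xᵢ^{pᵢ}/pᵢ ≤ ∏ᵢ xᵢ. -/
open Finset Real

theorem amgm_dual (k : ℕ) (p : Fin (k+1) → ℝ) (hp0 : 0 < p 0) (hp0' : p 0 < 1)
    (hpi : ∀ i, i ≠ 0 → p i < 0) (hsum : ∑ i, 1 / p i = 1)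
    (x : Fin (k+1) → ℝ) (hx : ∀ i, 0 < x i) :
    ∑ i, (x i) ^ (p i) / p i ≤ ∏ i, x i := by
  have hpne : ∀ i : Fin (k+1), p i ≠ 0 := by
    intro i
    by_cases h : i = 0
    · subst h; exact hp0.ne'
    · exact (hpi i h).ne
  have hG : 0 < ∏ i, x i := Finset.prod_pos fun i _ => hx i
  set v : Fin (k+1) → ℝ := fun i => if i = 0 then p 0 else -(p 0 / p i) with hv
  set z : Fin (k+1) → ℝ := fun i => if i = 0 then ∏ j, x j else x i ^ p i with hz
  have hvnn : ∀ i ∈ Finset.univ, 0 ≤ v i := by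
    intro i _
    by_cases h : i = 0
    · simp [hv, h, hp0.le]
    · simp only [hv, if_neg h]
      have : p 0 / p i < 0 := div_neg_of_pos_of_neg hp0 (hpi i h)
      linarith
  have hznn : ∀ i ∈ Finset.univ, 0 ≤ z i := by
    intro i _
    by_cases h : i = 0
    · simp [hz, h, hG.le]
    · simp only [hz, if_neg h]
      exact (Real.rpow_pos_of_pos (hx i) _).le
  -- sum of weights = 1
  have hsum0 : 1 / p 0 + ∑ i ∈ Finset.univ.erase 0, 1 / p i = 1 := by
    rw [Finset.add_sum_erase _ (fun i => 1 / p i) (Finset.mem_univ (0 : Fin (k+1)))]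
    exact hsum
  have hvsum : ∑ i, v i = 1 := by
    rw [← Finset.add_sum_erase _ _ (Finset.mem_univ 0)]
    have h1 : ∑ i ∈ Finset.univ.erase 0, v i
        = -(p 0) * ∑ i ∈ Finset.univ.erase 0, 1 / p i := by
      rw [Finset.mul_sum]
      refine Finset.sum_congr rfl fun i hi => ?_
      have h := Finset.ne_of_mem_erase hi
      simp only [hv, if_neg h]
      field_simp [hpne i]
    rw [h1]
    have h2 : ∑ i ∈ Finset.univ.erase 0, 1 / p i = 1 - 1 / p 0 := by linarith
    simp only [hv, if_pos rfl]
    rw [h2]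
    field_simp
    ring
  have key := Real.geom_mean_le_arith_mean_weighted Finset.univ v z hvnn hvsum hznn
  -- compute the product side
  have hprod : ∏ i, z i ^ v i = x 0 ^ p 0 := by
    rw [← Finset.mul_prod_erase _ _ (Finset.mem_univ 0)]
    have h0 : z 0 ^ v 0 = (∏ j, x j) ^ p 0 := by simp [hv, hz]
    have h1 : ∏ i ∈ Finset.univ.erase 0, z i ^ v i
        = ∏ i ∈ Finset.univ.erase 0, x i ^ (-(p 0)) := by
      refine Finset.prod_congr rfl fun i hi => ?_
      have h := Finset.ne_of_mem_erase hi
      simp only [hv, hz, if_neg h]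
      rw [← Real.rpow_mul (hx i).le]
      congr 1
      field_simp [hpne i]
    rw [h0, h1, ← Real.finset_prod_rpow _ _ (fun i _ => (hx i).le),
      ← Finset.mul_prod_erase _ (fun i => x i ^ p 0) (Finset.mem_univ 0),
      mul_assoc, ← Finset.prod_mul_distrib]
    have h2 : ∀ i ∈ Finset.univ.erase 0, x i ^ p 0 * x i ^ (-(p 0)) = 1 := by
      intro i _
      rw [← Real.rpow_add (hx i)]
      simp
    rw [Finset.prod_congr rfl h2]
    simp
  -- compute the sum side
  have hsums : ∑ i, v i * z i
      = p 0 * (∏ j, x j) - p 0 * ∑ i ∈ Finset.univ.erase 0, x i ^ p i / p i := by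
    rw [← Finset.add_sum_erase _ _ (Finset.mem_univ 0)]
    have h0 : v 0 * z 0 = p 0 * ∏ j, x j := by simp [hv, hz]
    have h1 : ∑ i ∈ Finset.univ.erase 0, v i * z i
        = -(p 0) * ∑ i ∈ Finset.univ.erase 0, x i ^ p i / p i := by
      rw [Finset.mul_sum]
      refine Finset.sum_congr rfl fun i hi => ?_
      have h := Finset.ne_of_mem_erase hi
      simp only [hv, hz, if_neg h]
      field_simp [hpne i]
    rw [h0, h1]; ring
  rw [hprod, hsums] at key
  -- conclude
  rw [← Finset.add_sum_erase _ _ (Finset.mem_univ 0)]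
  have hdiv : x 0 ^ p 0 / p 0 ≤ (∏ j, x j) - ∑ i ∈ Finset.univ.erase 0, x i ^ p i / p i := by
    rw [div_le_iff₀ hp0]
    nlinarith [key]
  linarith
end

section
/- If (X,Y) is (p,q)-hypercontractive with p > 1 (i.e., 1 ≤ q ≤ p and ‖E[g(Y)|X]‖_p ≤ ‖g(Y)‖_q for all g), then ρ_m(X;Y)² ≤ (q-1)/(p-1). -/
open Finset Real

noncomputable def condExpOn {Ω A : Type*} [Fintype Ω] [DecidableEq A]
    (w : Ω → ℝ) (X : Ω → A) (h : Ω → ℝ) (ω : Ω) : ℝ :=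
  (∑ ωp, if X ωp = X ω then w ωp * h ωp else 0) / (∑ ωp, if X ωp = X ω then w ωp else 0)

/-!
Take centred `f(X)`, `g(Y)` with second moments at most one and put `u = E[g(Y) | X]`. By the tower
property `E[f(X) g(Y)] = E[f(X) u]`, so by Cauchy–Schwarz it suffices to show
`(p - 1) E[u²] ≤ (q - 1) E[g(Y)²]`. Conditional expectation is linear, so hypercontractivity applied
to `1 + ε g` gives `‖1 + ε u‖_p ≤ ‖1 + ε g(Y)‖_q` for every `ε`. For centred `v` and `r ≥ 1`,
`‖1 + ε v‖_r = 1 + (r - 1) ε² E[v²] / 2 + o(ε²)` by the second-order expansion of `(1 + y) ^ r`;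
comparing the `ε²` coefficients gives the claim.
-/
open Filter Topology

lemma tendsto_one_add_rpow_sub_div_sq (p : ℝ) :
    Tendsto (fun y : ℝ => ((1 + y) ^ p - 1 - p * y) / y ^ 2) (𝓝[≠] 0)
      (𝓝 (p * (p - 1) / 2)) := by
  have hnum : ∀ᶠ y in 𝓝[≠] (0 : ℝ),
      HasDerivAt (fun y : ℝ => (1 + y) ^ p - 1 - p * y) (p * (1 + y) ^ (p - 1) - p) y := by
    filter_upwards [nhdsWithin_le_nhds (eventually_gt_nhds (show (-1 : ℝ) < 0 by norm_num))]
      with y hy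
    have h := (((hasDerivAt_id y).const_add 1).rpow_const (p := p)
      (Or.inl (by simp only [id]; linarith))).sub_const 1 |>.fun_sub ((hasDerivAt_id y).const_mul p)
    simpa using h
  have hden : ∀ᶠ y in 𝓝[≠] (0 : ℝ), HasDerivAt (fun y : ℝ => y ^ 2) (2 * y) y :=
    Eventually.of_forall fun y => by simpa using hasDerivAt_pow 2 y
  have hden' : ∀ᶠ y in 𝓝[≠] (0 : ℝ), 2 * y ≠ 0 := by
    filter_upwards [self_mem_nhdsWithin] with y hy using mul_ne_zero two_ne_zero hy
  have hnum0 : Tendsto (fun y : ℝ => (1 + y) ^ p - 1 - p * y) (𝓝[≠] 0) (𝓝 0) := by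
    have h : ContinuousAt (fun y : ℝ => (1 + y) ^ p - 1 - p * y) 0 := by
      have : ContinuousAt (fun y : ℝ => (1 + y) ^ p) 0 :=
        (continuousAt_const.add continuousAt_id).rpow_const (Or.inl (by norm_num))
      fun_prop
    simpa using h.tendsto.mono_left nhdsWithin_le_nhds
  have hden0 : Tendsto (fun y : ℝ => y ^ 2) (𝓝[≠] 0) (𝓝 0) := by
    simpa using ((continuous_pow 2).tendsto (0 : ℝ)).mono_left nhdsWithin_le_nhds
  -- the ratio of derivatives is `p / 2` times a difference quotient of `y ↦ (1 + y) ^ (p - 1)`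
  have hslope : Tendsto (fun y : ℝ => y⁻¹ * ((1 + y) ^ (p - 1) - 1)) (𝓝[≠] 0) (𝓝 (p - 1)) := by
    have h := ((hasDerivAt_id (0 : ℝ)).const_add 1).rpow_const (p := p - 1)
      (Or.inl (by norm_num))
    simpa using hasDerivAt_iff_tendsto_slope_zero.mp h
  refine HasDerivAt.lhopital_zero_nhdsNE hnum hden hden' hnum0 hden0 ?_
  convert hslope.const_mul (p / 2) using 2
  · field_simp
  · ring

lemma tendsto_one_add_mul_rpow_sub_div_sq (p x : ℝ) :
    Tendsto (fun ε : ℝ => ((1 + ε * x) ^ p - 1 - p * (ε * x)) / ε ^ 2) (𝓝[≠] 0)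
      (𝓝 (p * (p - 1) / 2 * x ^ 2)) := by
  rcases eq_or_ne x 0 with rfl | hx
  · simp
  have hscale : Tendsto (fun ε : ℝ => ε * x) (𝓝[≠] 0) (𝓝[≠] 0) := by
    refine tendsto_nhdsWithin_iff.2 ⟨?_, ?_⟩
    · simpa using ((continuous_mul_const x).tendsto 0).mono_left nhdsWithin_le_nhds
    · filter_upwards [self_mem_nhdsWithin] with ε hε using mul_ne_zero hε hx
  refine (((tendsto_one_add_rpow_sub_div_sq p).comp hscale).mul_const (x ^ 2)).congr' ?_
  filter_upwards [self_mem_nhdsWithin] with ε hε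
  simp only [Function.comp_apply]
  field_simp

lemma one_add_one_sub_inv_div_le_rpow_one_div {a p : ℝ} (ha : 0 < a) (hp : 0 < p) :
    1 + (1 - a⁻¹) / p ≤ a ^ (1 / p) := by
  rw [rpow_def_of_pos ha]
  calc 1 + (1 - a⁻¹) / p ≤ log a * (1 / p) + 1 := by
        rw [add_comm, mul_one_div]
        gcongr
        exact one_sub_inv_le_log_of_pos ha
    _ ≤ exp (log a * (1 / p)) := add_one_le_exp _

lemma rpow_one_div_le_one_add_sub_div {b q : ℝ} (hb : 0 ≤ b) (hq : 1 ≤ q) :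
    b ^ (1 / q) ≤ 1 + (b - 1) / q := by
  have h := rpow_one_add_le_one_add_mul_self (s := b - 1) (by linarith) (p := 1 / q)
    (by positivity) ((div_le_one (by linarith)).2 hq)
  rwa [add_sub_cancel, one_div_mul_eq_div] at h

section Expectation

variable {Ω : Type*} [Fintype Ω] {w : Ω → ℝ}

lemma fexp_congr_of_ne_zero {φ ψ : Ω → ℝ} (h : ∀ ω, w ω ≠ 0 → φ ω = ψ ω) :
    fexp w φ = fexp w ψ :=
  sum_congr rfl fun ω _ => by
    rcases eq_or_ne (w ω) 0 with hω | hω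
    · simp [hω]
    · rw [h ω hω]

lemma fexp_mul_sq_le (hw0 : ∀ ω, 0 ≤ w ω) (φ ψ : Ω → ℝ) :
    fexp w (fun ω => φ ω * ψ ω) ^ 2
      ≤ fexp w (fun ω => φ ω ^ 2) * fexp w (fun ω => ψ ω ^ 2) :=
  sum_sq_le_sum_mul_sum_of_sq_le_mul _ (fun ω _ => mul_nonneg (hw0 ω) (sq_nonneg _))
    (fun ω _ => mul_nonneg (hw0 ω) (sq_nonneg _)) fun ω _ => le_of_eq (by ring)

lemma fexp_one_add_mul (hw1 : ∑ ω, w ω = 1) {v : Ω → ℝ} (hv : fexp w v = 0) (ε : ℝ) :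
    fexp w (fun ω => 1 + ε * v ω) = 1 := by
  simp only [fexp] at hv ⊢
  simp only [mul_add, mul_one, sum_add_distrib, hw1, mul_left_comm _ ε, ← mul_sum, hv, mul_zero,
    add_zero]

lemma tendsto_fexp_abs_one_add_mul_rpow_sub_div_sq (hw1 : ∑ ω, w ω = 1) {v : Ω → ℝ}
    (hv : fexp w v = 0) (p : ℝ) :
    Tendsto (fun ε : ℝ => (fexp w (fun ω => |1 + ε * v ω| ^ p) - 1) / ε ^ 2) (𝓝[≠] 0)
      (𝓝 (p * (p - 1) / 2 * fexp w (fun ω => v ω ^ 2))) := by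
  have hlim := tendsto_finsetSum univ fun ω _ =>
    (tendsto_one_add_mul_rpow_sub_div_sq p (v ω)).const_mul (w ω)
  have hpos : ∀ᶠ ε : ℝ in 𝓝 0, ∀ ω, 0 < 1 + ε * v ω := eventually_all.2 fun ω =>
    (Continuous.tendsto' (by fun_prop) 0 1 (by simp)).eventually_const_lt one_pos
  convert hlim.congr' ?_ using 2
  · simp only [fexp, mul_sum]
    exact sum_congr rfl fun ω _ => by ring
  filter_upwards [nhdsWithin_le_nhds hpos] with ε hε
  simp only [fexp] at hv ⊢
  calc ∑ ω, w ω * (((1 + ε * v ω) ^ p - 1 - p * (ε * v ω)) / ε ^ 2)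
      = (∑ ω, w ω * |1 + ε * v ω| ^ p - ∑ ω, w ω - p * ε * ∑ ω, w ω * v ω) / ε ^ 2 := by
        simp only [mul_sum, ← sum_sub_distrib, sum_div]
        exact sum_congr rfl fun ω _ => by rw [abs_of_pos (hε ω)]; ring
    _ = _ := by rw [hw1, hv, mul_zero, sub_zero]

lemma one_le_fexp_abs_rpow (hw : IsProbWeight w) {φ : Ω → ℝ} (hφ : fexp w φ = 1) {r : ℝ}
    (hr : 1 ≤ r) : 1 ≤ fexp w (fun ω => |φ ω| ^ r) := by
  have h1 : 1 ≤ fexp w (fun ω => |φ ω|) :=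
    hφ ▸ sum_le_sum fun ω _ => mul_le_mul_of_nonneg_left (le_abs_self _) (hw.1 ω)
  calc (1 : ℝ) ≤ fexp w (fun ω => |φ ω|) ^ r := one_le_rpow h1 (by linarith)
    _ ≤ fexp w (fun ω => |φ ω| ^ r) :=
      rpow_arith_mean_le_arith_mean_rpow univ w _ (fun ω _ => hw.1 ω) hw.2
        (fun ω _ => abs_nonneg _) hr

lemma sub_one_mul_fexp_sq_le (hw : IsProbWeight w) {u g : Ω → ℝ} (hu : fexp w u = 0)
    (hg : fexp w g = 0) {p q : ℝ} (hp : 1 ≤ p) (hq : 1 ≤ q)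
    (hnorm : ∀ ε : ℝ, fexp w (fun ω => |1 + ε * u ω| ^ p) ^ (1 / p)
      ≤ fexp w (fun ω => |1 + ε * g ω| ^ q) ^ (1 / q)) :
    (p - 1) * fexp w (fun ω => u ω ^ 2) ≤ (q - 1) * fexp w (fun ω => g ω ^ 2) := by
  set A : ℝ → ℝ := fun ε => fexp w (fun ω => |1 + ε * u ω| ^ p)
  set B : ℝ → ℝ := fun ε => fexp w (fun ω => |1 + ε * g ω| ^ q)
  have hA : ∀ ε, 1 ≤ A ε := fun ε => one_le_fexp_abs_rpow hw (fexp_one_add_mul hw.2 hu ε) hp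
  have hB : ∀ ε, 1 ≤ B ε := fun ε => one_le_fexp_abs_rpow hw (fexp_one_add_mul hw.2 hg ε) hq
  have hkey : ∀ ε, (1 - (A ε)⁻¹) / p ≤ (B ε - 1) / q := fun ε => by
    have hlow : 1 + (1 - (A ε)⁻¹) / p ≤ A ε ^ (1 / p) :=
      one_add_one_sub_inv_div_le_rpow_one_div (by linarith [hA ε]) (by linarith)
    have hup : B ε ^ (1 / q) ≤ 1 + (B ε - 1) / q :=
      rpow_one_div_le_one_add_sub_div (by linarith [hB ε]) hq
    linarith [hnorm ε]
  have hAcont : Tendsto A (𝓝[≠] 0) (𝓝 1) := by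
    have hc : Continuous A := continuous_finsetSum _ fun ω _ =>
      continuous_const.mul ((continuous_rpow_const (by linarith)).comp (by fun_prop))
    simpa [A, fexp, hw.2] using (hc.tendsto 0).mono_left nhdsWithin_le_nhds
  have hL := (tendsto_fexp_abs_one_add_mul_rpow_sub_div_sq hw.2 hu p).mul
    ((hAcont.inv₀ one_ne_zero).div_const p)
  have hR := (tendsto_fexp_abs_one_add_mul_rpow_sub_div_sq hw.2 hg q).div_const q
  have hlim := le_of_tendsto_of_tendsto' hL hR fun ε => by
    have hA0 : A ε ≠ 0 := by linarith [hA ε]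
    calc (A ε - 1) / ε ^ 2 * ((A ε)⁻¹ / p) = (1 - (A ε)⁻¹) / p / ε ^ 2 := by
          field_simp
      _ ≤ (B ε - 1) / q / ε ^ 2 := div_le_div_of_nonneg_right (hkey ε) (sq_nonneg ε)
      _ = (B ε - 1) / ε ^ 2 / q := div_right_comm _ _ _
  field_simp at hlim
  linarith

end Expectation

section CondExp

variable {Ω A : Type*} [Fintype Ω] [DecidableEq A] {w : Ω → ℝ} (X : Ω → A)

lemma le_sum_ite_eq_apply (hw0 : ∀ ω, 0 ≤ w ω) (ω : Ω) :
    w ω ≤ ∑ ω', if X ω' = X ω then w ω' else 0 := by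
  simpa using single_le_sum (f := fun ω' => if X ω' = X ω then w ω' else 0)
    (fun ω' _ => by split_ifs <;> simp [hw0]) (mem_univ ω)

lemma condExpOn_one_add_mul (hw0 : ∀ ω, 0 ≤ w ω) (h : Ω → ℝ) (ε : ℝ) {ω : Ω} (hω : w ω ≠ 0) :
    condExpOn w X (fun ω' => 1 + ε * h ω') ω = 1 + ε * condExpOn w X h ω := by
  have hD : (∑ ω', if X ω' = X ω then w ω' else 0) ≠ 0 :=
    ((hw0 ω).lt_of_ne hω.symm |>.trans_le (le_sum_ite_eq_apply X hw0 ω)).ne'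
  simp only [condExpOn]
  field_simp
  simp only [mul_sum, ← sum_add_distrib]
  exact sum_congr rfl fun ω' _ => by split_ifs <;> ring

lemma fexp_mul_condExpOn (hw0 : ∀ ω, 0 ≤ w ω) (f : A → ℝ) (h : Ω → ℝ) :
    fexp w (fun ω => f (X ω) * condExpOn w X h ω) = fexp w (fun ω => f (X ω) * h ω) := by
  set D : A → ℝ := fun a => ∑ ω', if X ω' = a then w ω' else 0
  set c : Ω → ℝ := fun ω' => w ω' * h ω' * f (X ω') / D (X ω')
  have hexpand : ∀ ω, w ω * (f (X ω) * condExpOn w X h ω)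
      = ∑ ω', if X ω' = X ω then c ω' * w ω else 0 := fun ω => by
    simp only [condExpOn, div_eq_mul_inv, sum_mul, mul_sum]
    refine sum_congr rfl fun ω' _ => ?_
    split_ifs with hX
    · simp only [c, D, hX]
      ring
    · simp
  have hfiber : ∀ ω', (∑ ω, if X ω' = X ω then c ω' * w ω else 0) = c ω' * D (X ω') :=
    fun ω' => by simp only [D, mul_sum, eq_comm (a := X ω'), mul_ite, mul_zero]
  simp only [fexp, hexpand]
  rw [sum_comm]
  refine sum_congr rfl fun ω' _ => ?_
  rw [hfiber]
  rcases eq_or_ne (w ω') 0 with hω' | hω'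
  · simp [c, hω']
  · have hD : D (X ω') ≠ 0 :=
      ((hw0 ω').lt_of_ne hω'.symm |>.trans_le (le_sum_ite_eq_apply X hw0 ω')).ne'
    simp only [c]
    field_simp

end CondExp

lemma maxCorr_sq_le {Ω A B : Type*} [Fintype Ω] {w : Ω → ℝ} {X : Ω → A} {Y : Ω → B} {c : ℝ}
    (h : ∀ (f : A → ℝ) (g : B → ℝ), fexp w (fun ω => f (X ω)) = 0 →
      fexp w (fun ω => g (Y ω)) = 0 → fexp w (fun ω => f (X ω) ^ 2) ≤ 1 →
      fexp w (fun ω => g (Y ω) ^ 2) ≤ 1 → fexp w (fun ω => f (X ω) * g (Y ω)) ^ 2 ≤ c) :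
    maxCorr w X Y ^ 2 ≤ c := by
  have hc : 0 ≤ c := by simpa [fexp] using h 0 0
  unfold maxCorr
  refine (le_sqrt (sSup_nonneg' ⟨0, ?zero, le_rfl⟩) hc).1 (csSup_le ⟨0, ?zero⟩ ?_)
  case zero => exact ⟨0, 0, by simp [fexp]⟩
  rintro r ⟨f, g, hf, hg, hf2, hg2, rfl⟩
  exact (le_abs_self _).trans (abs_le_sqrt (h f g hf hg hf2 hg2))

theorem hc_implies_maxCorr_sq_bound_general {Ω A B : Type*} [Fintype Ω]
    [DecidableEq A]
    (w : Ω → ℝ) (hw : IsProbWeight w) (X : Ω → A) (Y : Ω → B)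
    (p q : ℝ) (hq : 1 ≤ q) (hp : 1 < p)
    (hhc : ∀ g : B → ℝ,
      (fexp w (fun ω => |condExpOn w X (fun ωp => g (Y ωp)) ω| ^ p)) ^ (1/p)
        ≤ (fexp w (fun ω => |g (Y ω)| ^ q)) ^ (1/q)) :
    (maxCorr w X Y)^2 ≤ (q - 1) / (p - 1) := by
  refine maxCorr_sq_le fun f g hf hg hf2 hg2 => ?_
  set u := condExpOn w X (fun ω => g (Y ω))
  have hu : fexp w u = 0 := by
    have h := fexp_mul_condExpOn X hw.1 (fun _ => 1) (fun ω => g (Y ω))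
    simp only [one_mul] at h
    exact h.trans hg
  have hlin : ∀ ε, fexp w (fun ω => |condExpOn w X (fun ω' => 1 + ε * g (Y ω')) ω| ^ p)
      = fexp w (fun ω => |1 + ε * u ω| ^ p) := fun ε =>
    fexp_congr_of_ne_zero fun ω hω => by rw [condExpOn_one_add_mul X hw.1 _ ε hω]
  have hvar := sub_one_mul_fexp_sq_le hw hu hg hp.le hq fun ε =>
    hlin ε ▸ hhc fun b => 1 + ε * g b
  calc fexp w (fun ω => f (X ω) * g (Y ω)) ^ 2 = fexp w (fun ω => f (X ω) * u ω) ^ 2 := by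
        rw [fexp_mul_condExpOn X hw.1]
    _ ≤ fexp w (fun ω => f (X ω) ^ 2) * fexp w (fun ω => u ω ^ 2) := fexp_mul_sq_le hw.1 _ _
    _ ≤ 1 * ((q - 1) / (p - 1)) := by
        refine mul_le_mul hf2 ?_ (sum_nonneg fun ω _ => mul_nonneg (hw.1 ω) (sq_nonneg _))
          zero_le_one
        rw [le_div_iff₀ (by linarith)]
        nlinarith
    _ = (q - 1) / (p - 1) := one_mul _

theorem hc_implies_maxCorr_sq_bound {Ω A B : Type*} [Fintype Ω] [Fintype A] [Fintype B]
    [DecidableEq A]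
    (w : Ω → ℝ) (hw : IsProbWeight w) (X : Ω → A) (Y : Ω → B)
    (p q : ℝ) (hq : 1 ≤ q) (hqp : q ≤ p) (hp : 1 < p)
    (hhc : ∀ g : B → ℝ,
      (fexp w (fun ω => |condExpOn w X (fun ωp => g (Y ωp)) ω| ^ p)) ^ (1/p)
        ≤ (fexp w (fun ω => |g (Y ω)| ^ q)) ^ (1/q)) :
    (maxCorr w X Y)^2 ≤ (q - 1) / (p - 1) :=
  hc_implies_maxCorr_sq_bound_general w hw X Y p q hq hp hhc
end

section
/- Equivalence of reverse hypercontractivity and reverse Hölder-contractivity: for p ≤ q ≤ 1 with p < 1, p ≠ 0, the inequality ‖E[g(Y)|X]‖_p ≥ ‖g(Y)‖_q for all strictly positive g is equivalent to E[f(X)g(Y)] ≥ ‖f(X)‖_{p'} ‖g(Y)‖_q for all strictly positive f, g, where 1/p + 1/p' = 1. -/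
open Finset Real

noncomputable def pnorm {Ω : Type*} [Fintype Ω] (w : Ω → ℝ) (p : ℝ) (W : Ω → ℝ) : ℝ :=
  if p ≤ 0 ∧ ∃ ω, 0 < w ω ∧ W ω = 0 then 0
  else if p = 0 then Real.exp (fexp w (fun ω => Real.log |W ω|))
  else (fexp w (fun ω => |W ω| ^ p)) ^ (1 / p)

section Helpers

variable {Ω : Type*} [Fintype Ω] {w : Ω → ℝ}

lemma sum_congr_support (hw : ∀ ω, 0 ≤ w ω) {u v : Ω → ℝ}
    (h : ∀ ω, 0 < w ω → u ω = v ω) :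
    ∑ ω, w ω * u ω = ∑ ω, w ω * v ω := by
  refine Finset.sum_congr rfl fun ω _ => ?_
  rcases (hw ω).lt_or_eq with hpos | h0
  · rw [h ω hpos]
  · rw [← h0, zero_mul, zero_mul]

lemma holder2 (hw : ∀ ω, 0 ≤ w ω) {s : ℝ} (hs : 0 < s) (hs1 : s < 1)
    {a b : Ω → ℝ} (ha : ∀ ω, 0 ≤ a ω) (hb : ∀ ω, 0 ≤ b ω) :
    ∑ ω, w ω * (a ω ^ s * b ω ^ (1 - s)) ≤
      (∑ ω, w ω * a ω) ^ s * (∑ ω, w ω * b ω) ^ (1 - s) := by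
  set A := ∑ ω, w ω * a ω with hA
  set B := ∑ ω, w ω * b ω with hB
  have hA0 : 0 ≤ A := Finset.sum_nonneg fun ω _ => mul_nonneg (hw ω) (ha ω)
  have hB0 : 0 ≤ B := Finset.sum_nonneg fun ω _ => mul_nonneg (hw ω) (hb ω)
  have hRHS : 0 ≤ A ^ s * B ^ (1 - s) :=
    mul_nonneg (Real.rpow_nonneg hA0 _) (Real.rpow_nonneg hB0 _)
  rcases hA0.eq_or_lt with hA' | hA'
  · -- A = 0
    have hz : ∀ ω ∈ Finset.univ, w ω * a ω = 0 :=
      (Finset.sum_eq_zero_iff_of_nonneg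
        (fun ω _ => mul_nonneg (hw ω) (ha ω))).mp hA'.symm
    have : ∑ ω, w ω * (a ω ^ s * b ω ^ (1 - s)) = 0 := by
      refine Finset.sum_eq_zero fun ω _ => ?_
      rcases mul_eq_zero.mp (hz ω (Finset.mem_univ ω)) with h0 | h0
      · rw [h0, zero_mul]
      · rw [h0, Real.zero_rpow hs.ne', zero_mul, mul_zero]
    rw [this]; exact hRHS
  rcases hB0.eq_or_lt with hB' | hB'
  · have hz : ∀ ω ∈ Finset.univ, w ω * b ω = 0 :=
      (Finset.sum_eq_zero_iff_of_nonneg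
        (fun ω _ => mul_nonneg (hw ω) (hb ω))).mp hB'.symm
    have : ∑ ω, w ω * (a ω ^ s * b ω ^ (1 - s)) = 0 := by
      refine Finset.sum_eq_zero fun ω _ => ?_
      rcases mul_eq_zero.mp (hz ω (Finset.mem_univ ω)) with h0 | h0
      · rw [h0, zero_mul]
      · rw [h0, Real.zero_rpow (by linarith : (1:ℝ) - s ≠ 0), mul_zero, mul_zero]
    rw [this]; exact hRHS
  -- main case A > 0, B > 0
  have hAs : (0:ℝ) < A ^ s := Real.rpow_pos_of_pos hA' _
  have hBs : (0:ℝ) < B ^ (1 - s) := Real.rpow_pos_of_pos hB' _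
  have key : ∀ ω, w ω * (a ω ^ s * b ω ^ (1 - s)) ≤
      A ^ s * B ^ (1 - s) * (w ω * (s * (a ω / A) + (1 - s) * (b ω / B))) := by
    intro ω
    have hgm : (a ω / A) ^ s * (b ω / B) ^ (1 - s)
        ≤ s * (a ω / A) + (1 - s) * (b ω / B) :=
      Real.geom_mean_le_arith_mean2_weighted hs.le (by linarith)
        (div_nonneg (ha ω) hA0) (div_nonneg (hb ω) hB0) (by ring)
    have hrw : (a ω / A) ^ s * (b ω / B) ^ (1 - s)
        = (a ω ^ s * b ω ^ (1 - s)) / (A ^ s * B ^ (1 - s)) := by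
      rw [Real.div_rpow (ha ω) hA0, Real.div_rpow (hb ω) hB0]
      field_simp
    rw [hrw] at hgm
    have := mul_le_mul_of_nonneg_left hgm
      (mul_nonneg (hw ω) (mul_nonneg hAs.le hBs.le))
    calc w ω * (a ω ^ s * b ω ^ (1 - s))
        = w ω * (A ^ s * B ^ (1 - s)) *
            ((a ω ^ s * b ω ^ (1 - s)) / (A ^ s * B ^ (1 - s))) := by
          field_simp
      _ ≤ w ω * (A ^ s * B ^ (1 - s)) *
            (s * (a ω / A) + (1 - s) * (b ω / B)) := this
      _ = A ^ s * B ^ (1 - s) * (w ω * (s * (a ω / A) + (1 - s) * (b ω / B))) := by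
          ring
  calc ∑ ω, w ω * (a ω ^ s * b ω ^ (1 - s))
      ≤ ∑ ω, A ^ s * B ^ (1 - s) * (w ω * (s * (a ω / A) + (1 - s) * (b ω / B))) :=
        Finset.sum_le_sum fun ω _ => key ω
    _ = A ^ s * B ^ (1 - s) * (s / A * A + (1 - s) / B * B) := by
        rw [← Finset.mul_sum]
        congr 1
        have : ∀ ω, w ω * (s * (a ω / A) + (1 - s) * (b ω / B))
            = s / A * (w ω * a ω) + (1 - s) / B * (w ω * b ω) := by
          intro ω; ring
        simp_rw [this]
        rw [Finset.sum_add_distrib, ← Finset.mul_sum, ← Finset.mul_sum, ← hA, ← hB]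
    _ = A ^ s * B ^ (1 - s) := by
        rw [div_mul_cancel₀ _ hA'.ne', div_mul_cancel₀ _ hB'.ne']
        ring_nf

/-- Reverse Hölder inequality for weighted finite sums, with `0 < s < 1`
and conjugate exponent `s' < 0`. -/
lemma rev_holder (hw : IsProbWeight w) {s s' : ℝ} (hs : 0 < s) (hs1 : s < 1)
    (hcon : 1 / s + 1 / s' = 1)
    {F G : Ω → ℝ} (hF : ∀ ω, 0 < w ω → 0 < F ω) (hG : ∀ ω, 0 < w ω → 0 < G ω) :
    (∑ ω, w ω * F ω ^ s) ^ (1 / s) * (∑ ω, w ω * G ω ^ s') ^ (1 / s')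
      ≤ ∑ ω, w ω * (F ω * G ω) := by
  obtain ⟨hw0, hw1⟩ := hw
  have hex : ∃ ω, 0 < w ω := by
    by_contra hc
    push_neg at hc
    have : ∑ ω, w ω = 0 :=
      Finset.sum_eq_zero fun ω _ => le_antisymm (hc ω) (hw0 ω)
    rw [this] at hw1; norm_num at hw1
  have hs'ne : s' ≠ 0 := by
    intro h
    rw [h, div_zero, add_zero, div_eq_one_iff_eq hs.ne'] at hcon
    linarith
  have h1s : 1 < 1 / s := one_lt_one_div hs hs1
  have hs'inv : 1 / s' = 1 - 1 / s := by linarith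
  have hs'neg : s' < 0 := by
    have : 1 / s' < 0 := by rw [hs'inv]; linarith
    exact one_div_neg.mp this
  have hss' : s' * (1 - s) = -s := by
    have h1 : s' * (s - 1) = s := by
      field_simp at hcon
      nlinarith [hcon]
    nlinarith [h1]
  -- apply holder2 with a = F*G, b = G^s' (truncated to support)
  set a : Ω → ℝ := fun ω => if 0 < w ω then F ω * G ω else 0 with hadef
  set b : Ω → ℝ := fun ω => if 0 < w ω then G ω ^ s' else 0 with hbdef
  have ha : ∀ ω, 0 ≤ a ω := by
    intro ω; rw [hadef]; dsimp only
    split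
    · exact mul_nonneg (hF ω ‹_›).le (hG ω ‹_›).le
    · exact le_refl 0
  have hb : ∀ ω, 0 ≤ b ω := by
    intro ω; rw [hbdef]; dsimp only
    split
    · exact (Real.rpow_pos_of_pos (hG ω ‹_›) _).le
    · exact le_refl 0
  have H2 := holder2 hw0 hs hs1 ha hb
  set T := ∑ ω, w ω * (F ω * G ω) with hT
  set M := ∑ ω, w ω * F ω ^ s with hM
  set N := ∑ ω, w ω * G ω ^ s' with hN
  have hTa : ∑ ω, w ω * a ω = T := by
    apply sum_congr_support hw0; intro ω hω; rw [hadef]; simp [hω]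
  have hNb : ∑ ω, w ω * b ω = N := by
    apply sum_congr_support hw0; intro ω hω; rw [hbdef]; simp [hω]
  have hMab : ∑ ω, w ω * (a ω ^ s * b ω ^ (1 - s)) = M := by
    apply sum_congr_support hw0
    intro ω hω
    have hFω := hF ω hω
    have hGω := hG ω hω
    rw [hadef, hbdef]; dsimp only
    rw [if_pos hω, if_pos hω, Real.mul_rpow hFω.le hGω.le,
      ← Real.rpow_mul hGω.le, hss', mul_assoc, ← Real.rpow_add hGω,
      add_neg_cancel, Real.rpow_zero, mul_one]
  rw [hTa, hNb, hMab] at H2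
  -- H2 : M ≤ T ^ s * N ^ (1 - s)
  obtain ⟨ω0, hω0⟩ := hex
  have hterm : ∀ i ∈ Finset.univ, 0 ≤ w i * G i ^ s' := by
    intro i _
    rcases (hw0 i).lt_or_eq with hpos | h0
    · exact mul_nonneg hpos.le (Real.rpow_pos_of_pos (hG i hpos) _).le
    · rw [← h0, zero_mul]
  have hNpos : 0 < N := by
    have h1 : w ω0 * G ω0 ^ s' ≤ N :=
      Finset.single_le_sum hterm (Finset.mem_univ ω0)
    have h2 : 0 < w ω0 * G ω0 ^ s' :=
      mul_pos hω0 (Real.rpow_pos_of_pos (hG ω0 hω0) _)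
    linarith
  have hT0 : 0 ≤ T := by
    refine Finset.sum_nonneg fun i _ => ?_
    rcases (hw0 i).lt_or_eq with hpos | h0
    · exact mul_nonneg hpos.le (mul_nonneg (hF i hpos).le (hG i hpos).le)
    · rw [← h0, zero_mul]
  have hM0 : 0 ≤ M := by
    refine Finset.sum_nonneg fun i _ => ?_
    rcases (hw0 i).lt_or_eq with hpos | h0
    · exact mul_nonneg hpos.le (Real.rpow_pos_of_pos (hF i hpos) _).le
    · rw [← h0, zero_mul]
  have hexp : (1 - s) * (1 / s) + 1 / s' = 0 := by
    have he : (1 - s) * (1 / s) = 1 / s - 1 := by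
      rw [sub_mul, one_mul, mul_one_div, div_self hs.ne']
    linarith
  calc M ^ (1 / s) * N ^ (1 / s')
      ≤ (T ^ s * N ^ (1 - s)) ^ (1 / s) * N ^ (1 / s') := by
        apply mul_le_mul_of_nonneg_right _ (Real.rpow_nonneg hNpos.le _)
        exact Real.rpow_le_rpow hM0 H2 (by positivity)
    _ = T * (N ^ ((1 - s) * (1 / s)) * N ^ (1 / s')) := by
        rw [Real.mul_rpow (Real.rpow_nonneg hT0 _) (Real.rpow_nonneg hNpos.le _),
          ← Real.rpow_mul hT0, mul_one_div, div_self hs.ne', Real.rpow_one,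
          ← Real.rpow_mul hNpos.le, mul_assoc]
    _ = T := by
        rw [← Real.rpow_add hNpos, hexp, Real.rpow_zero, mul_one]

/-- `pnorm` evaluated on functions positive on the support of `w`. -/
lemma pnorm_eq {r : ℝ} (hr : r ≠ 0) (hw0 : ∀ ω, 0 ≤ w ω) {W : Ω → ℝ}
    (hW : ∀ ω, 0 < w ω → 0 < W ω) :
    pnorm w r W = (∑ ω, w ω * W ω ^ r) ^ (1 / r) := by
  unfold pnorm fexp
  rw [if_neg, if_neg hr]
  · congr 1
    refine sum_congr_support hw0 fun ω hω => ?_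
    rw [abs_of_pos (hW ω hω)]
  · rintro ⟨-, ω, hω, hW0⟩
    exact (hW ω hω).ne' hW0

lemma pnorm_nonneg (hw0 : ∀ ω, 0 ≤ w ω) (r : ℝ) (W : Ω → ℝ) :
    0 ≤ pnorm w r W := by
  unfold pnorm
  split_ifs
  · exact le_refl 0
  · exact (Real.exp_pos _).le
  · refine Real.rpow_nonneg (Finset.sum_nonneg fun ω _ => ?_) _
    exact mul_nonneg (hw0 ω) (Real.rpow_nonneg (abs_nonneg _) _)

/-- Tower property for `condExpOn`. -/
lemma tower (hw0 : ∀ ω, 0 ≤ w ω) {A : Type*} [DecidableEq A] (X : Ω → A)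
    (f : A → ℝ) (t : Ω → ℝ) :
    ∑ ω, w ω * (f (X ω) * condExpOn w X t ω) = ∑ ω, w ω * (f (X ω) * t ω) := by
  have hmaps : ∀ x ∈ (Finset.univ : Finset Ω), X x ∈ Finset.univ.image X :=
    fun x _ => Finset.mem_image_of_mem _ (Finset.mem_univ x)
  rw [← Finset.sum_fiberwise_of_maps_to hmaps, ← Finset.sum_fiberwise_of_maps_to hmaps]
  refine Finset.sum_congr rfl fun a _ => ?_
  have hmem : ∀ ω ∈ Finset.univ.filter (fun ω => X ω = a), X ω = a :=
    fun ω hω => (Finset.mem_filter.mp hω).2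
  set D : ℝ := ∑ ωp, if X ωp = a then w ωp else 0 with hD
  set Nu : ℝ := ∑ ωp, if X ωp = a then w ωp * t ωp else 0 with hNu
  have hDf : D = ∑ ω ∈ Finset.univ.filter (fun ω => X ω = a), w ω := by
    rw [Finset.sum_filter]
  have hNf : Nu = ∑ ω ∈ Finset.univ.filter (fun ω => X ω = a), w ω * t ω := by
    rw [Finset.sum_filter]
  have hce : ∀ ω ∈ Finset.univ.filter (fun ω => X ω = a),
      w ω * (f (X ω) * condExpOn w X t ω) = w ω * (f a * (Nu / D)) := by
    intro ω hω
    rw [hmem ω hω] at *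
    unfold condExpOn
    rw [hmem ω hω]
  rw [Finset.sum_congr rfl hce]
  by_cases hD0 : D = 0
  · have hz : ∀ ω ∈ Finset.univ.filter (fun ω => X ω = a), w ω = 0 := by
      have := (Finset.sum_eq_zero_iff_of_nonneg
        (fun ω _ => hw0 ω)).mp (hDf ▸ hD0)
      exact this
    rw [Finset.sum_eq_zero, Finset.sum_eq_zero]
    · intro ω hω; rw [hz ω hω, zero_mul]
    · intro ω hω; rw [hz ω hω, zero_mul]
  · have hL : ∑ ω ∈ Finset.univ.filter (fun ω => X ω = a), w ω * (f a * (Nu / D))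
        = f a * (Nu / D) * D := by
      rw [hDf, Finset.mul_sum]
      refine Finset.sum_congr rfl fun ω _ => ?_
      ring
    have hR : ∑ ω ∈ Finset.univ.filter (fun ω => X ω = a), w ω * (f (X ω) * t ω)
        = f a * Nu := by
      rw [hNf, Finset.mul_sum]
      refine Finset.sum_congr rfl fun ω hω => ?_
      rw [hmem ω hω]; ring
    rw [hL, hR]
    field_simp

/-- Positivity of `condExpOn` on the support. -/
lemma condExpOn_pos (hw0 : ∀ ω, 0 ≤ w ω) {A : Type*} [DecidableEq A] (X : Ω → A)
    {t : Ω → ℝ} (ht : ∀ ω, 0 < t ω) {ω : Ω} (hω : 0 < w ω) :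
    0 < condExpOn w X t ω := by
  unfold condExpOn
  apply div_pos
  · have h1 : (if X ω = X ω then w ω * t ω else 0) ≤
        ∑ ωp, if X ωp = X ω then w ωp * t ωp else 0 := by
      refine Finset.single_le_sum
        (f := fun i => if X i = X ω then w i * t i else 0)
        (fun i _ => ?_) (Finset.mem_univ ω)
      split
      · exact mul_nonneg (hw0 i) (ht i).le
      · exact le_refl 0
    rw [if_pos rfl] at h1
    exact lt_of_lt_of_le (mul_pos hω (ht ω)) h1
  · have h1 : (if X ω = X ω then w ω else 0) ≤
        ∑ ωp, if X ωp = X ω then w ωp else 0 := by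
      refine Finset.single_le_sum
        (f := fun i => if X i = X ω then w i else 0)
        (fun i _ => ?_) (Finset.mem_univ ω)
      split
      · exact hw0 i
      · exact le_refl 0
    rw [if_pos rfl] at h1
    exact lt_of_lt_of_le hω h1

end Helpers

theorem rhc_iff_reverse_holder_contract {Ω A B : Type*} [Fintype Ω] [DecidableEq A]
    (w : Ω → ℝ) (hw : IsProbWeight w) (X : Ω → A) (Y : Ω → B)
    (p q p' : ℝ) (hp : p < 1) (hp0 : p ≠ 0) (hpq : p ≤ q) (hq : q ≤ 1)
    (hp' : 1/p + 1/p' = 1) :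
    (∀ g : B → ℝ, (∀ b, 0 < g b) →
      pnorm w q (fun ω => g (Y ω))
        ≤ pnorm w p (condExpOn w X (fun ωp => g (Y ωp))))
    ↔ (∀ f : A → ℝ, ∀ g : B → ℝ, (∀ a, 0 < f a) → (∀ b, 0 < g b) →
        pnorm w p' (fun ω => f (X ω)) * pnorm w q (fun ω => g (Y ω))
          ≤ fexp w (fun ω => f (X ω) * g (Y ω))) := by
  classical
  obtain ⟨hw0, hw1⟩ := hw
  have hex : ∃ ω, 0 < w ω := by
    by_contra hc
    push_neg at hc
    have : ∑ ω, w ω = 0 := Finset.sum_eq_zero fun ω _ => le_antisymm (hc ω) (hw0 ω)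
    rw [this] at hw1; norm_num at hw1
  have hp'0 : p' ≠ 0 := by
    intro h
    rw [h, div_zero, add_zero, div_eq_one_iff_eq hp0] at hp'
    linarith
  constructor
  · -- hypercontractivity implies Hölder-contractivity
    intro H f g hf hg
    have hhpos : ∀ ω, 0 < w ω → 0 < condExpOn w X (fun ωp => g (Y ωp)) ω :=
      fun ω hω => condExpOn_pos hw0 X (fun ω => hg _) hω
    have hfX : ∀ ω : Ω, 0 < w ω → 0 < f (X ω) := fun ω _ => hf _
    have key : pnorm w p' (fun ω => f (X ω)) *
        pnorm w p (condExpOn w X (fun ωp => g (Y ωp)))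
        ≤ ∑ ω, w ω * (f (X ω) * condExpOn w X (fun ωp => g (Y ωp)) ω) := by
      rw [pnorm_eq hp'0 hw0 (fun ω _ => hf (X ω)), pnorm_eq hp0 hw0 hhpos]
      rcases lt_or_gt_of_ne hp0 with hneg | hposp
      · -- p < 0, hence 0 < p' < 1 and (p')' = p
        have h1p : 1 / p < 0 := one_div_neg.mpr hneg
        have h2 : 1 < 1 / p' := by linarith
        have hp'pos : 0 < p' := one_div_pos.mp (by linarith)
        have hp'lt1 : p' < 1 := by
          have h3 : p' * (1 / p') = 1 := by field_simp
          nlinarith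
        exact rev_holder ⟨hw0, hw1⟩ hp'pos hp'lt1
          (by linarith : 1 / p' + 1 / p = 1) hfX hhpos
      · have hrh := rev_holder ⟨hw0, hw1⟩ hposp hp hp' hhpos hfX
        calc (∑ ω, w ω * f (X ω) ^ p') ^ (1 / p') *
              (∑ ω, w ω * condExpOn w X (fun ωp => g (Y ωp)) ω ^ p) ^ (1 / p)
            = (∑ ω, w ω * condExpOn w X (fun ωp => g (Y ωp)) ω ^ p) ^ (1 / p) *
              (∑ ω, w ω * f (X ω) ^ p') ^ (1 / p') := by ring
          _ ≤ ∑ ω, w ω * (condExpOn w X (fun ωp => g (Y ωp)) ω * f (X ω)) := hrh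
          _ = ∑ ω, w ω * (f (X ω) * condExpOn w X (fun ωp => g (Y ωp)) ω) :=
              Finset.sum_congr rfl fun ω _ => by ring
    have tw := tower hw0 X f (fun ωp => g (Y ωp))
    have hq' := H g hg
    calc pnorm w p' (fun ω => f (X ω)) * pnorm w q (fun ω => g (Y ω))
        ≤ pnorm w p' (fun ω => f (X ω)) *
            pnorm w p (condExpOn w X (fun ωp => g (Y ωp))) :=
          mul_le_mul_of_nonneg_left hq' (pnorm_nonneg hw0 _ _)
      _ ≤ ∑ ω, w ω * (f (X ω) * condExpOn w X (fun ωp => g (Y ωp)) ω) := key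
      _ = ∑ ω, w ω * (f (X ω) * g (Y ω)) := tw
      _ = fexp w (fun ω => f (X ω) * g (Y ω)) := rfl
  · -- Hölder-contractivity implies hypercontractivity
    intro H g hg
    obtain ⟨ω0, hω0⟩ := hex
    set h : Ω → ℝ := condExpOn w X (fun ωp => g (Y ωp)) with hhdef
    have hhpos : ∀ ω, 0 < w ω → 0 < h ω :=
      fun ω hω => condExpOn_pos hw0 X (fun ω => hg _) hω
    set μ : A → ℝ := fun a => ∑ ωp, if X ωp = a then w ωp else 0 with hμdef
    set ν : A → ℝ := fun a => ∑ ωp, if X ωp = a then w ωp * g (Y ωp) else 0 with hνdef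
    have hhval : ∀ ω, h ω = ν (X ω) / μ (X ω) := fun ω => rfl
    set f : A → ℝ := fun a => if 0 < μ a then (ν a / μ a) ^ (p - 1) else 1 with hfdef
    have hν_of_μ : ∀ a, 0 < μ a → 0 < ν a := by
      intro a hμa
      obtain ⟨ωp, hωp⟩ : ∃ ωp, 0 < if X ωp = a then w ωp else 0 := by
        by_contra hc
        push_neg at hc
        have : μ a ≤ 0 := Finset.sum_nonpos fun i _ => hc i
        linarith
      have hXa : X ωp = a := by
        by_contra hne; rw [if_neg hne] at hωp; exact lt_irrefl _ hωp
      rw [if_pos hXa] at hωp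
      have hterm : (if X ωp = a then w ωp * g (Y ωp) else 0) ≤ ν a := by
        refine Finset.single_le_sum
          (f := fun i => if X i = a then w i * g (Y i) else 0)
          (fun i _ => ?_) (Finset.mem_univ ωp)
        split
        · exact mul_nonneg (hw0 i) (hg _).le
        · exact le_refl 0
      rw [if_pos hXa] at hterm
      exact lt_of_lt_of_le (mul_pos hωp (hg _)) hterm
    have hf : ∀ a, 0 < f a := by
      intro a; rw [hfdef]; dsimp only; split
      · exact Real.rpow_pos_of_pos (div_pos (hν_of_μ a ‹_›) ‹_›) _
      · exact one_pos
    have hμX : ∀ ω, 0 < w ω → 0 < μ (X ω) := by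
      intro ω hω
      have hterm : (if X ω = X ω then w ω else 0) ≤ μ (X ω) := by
        refine Finset.single_le_sum
          (f := fun i => if X i = X ω then w i else 0)
          (fun i _ => ?_) (Finset.mem_univ ω)
        split
        · exact hw0 i
        · exact le_refl 0
      rw [if_pos rfl] at hterm
      exact lt_of_lt_of_le hω hterm
    have hfh : ∀ ω, 0 < w ω → f (X ω) = h ω ^ (p - 1) := by
      intro ω hω
      rw [hfdef]; dsimp only
      rw [if_pos (hμX ω hω), hhval ω]
    have HH := H f g hf hg
    set M := ∑ ω, w ω * h ω ^ p with hM
    have hMpos : 0 < M := by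
      have hterm : w ω0 * h ω0 ^ p ≤ M := by
        refine Finset.single_le_sum (f := fun i => w i * h i ^ p)
          (fun i _ => ?_) (Finset.mem_univ ω0)
        rcases (hw0 i).lt_or_eq with hpos | h0
        · exact mul_nonneg hpos.le (Real.rpow_pos_of_pos (hhpos i hpos) _).le
        · rw [← h0, zero_mul]
      have : 0 < w ω0 * h ω0 ^ p :=
        mul_pos hω0 (Real.rpow_pos_of_pos (hhpos ω0 hω0) _)
      linarith
    have hpp' : (p - 1) * p' = p := by
      have h1 : p' + p = p * p' := by
        field_simp at hp'
        linarith
      nlinarith [h1]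
    have e1 : fexp w (fun ω => f (X ω) * g (Y ω)) = M := by
      have t0 : fexp w (fun ω => f (X ω) * g (Y ω))
          = ∑ ω, w ω * (f (X ω) * g (Y ω)) := rfl
      rw [t0, ← tower hw0 X f (fun ωp => g (Y ωp))]
      refine sum_congr_support hw0 fun ω hω => ?_
      rw [hfh ω hω]
      rw [← Real.rpow_add_one (hhpos ω hω).ne' (p - 1), sub_add_cancel]
    have e2 : pnorm w p' (fun ω => f (X ω)) = M ^ (1 / p') := by
      rw [pnorm_eq hp'0 hw0 (fun ω _ => hf (X ω))]
      congr 1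
      refine sum_congr_support hw0 fun ω hω => ?_
      rw [hfh ω hω, ← Real.rpow_mul (hhpos ω hω).le, hpp']
    have e3 : pnorm w p h = M ^ (1 / p) := by
      rw [pnorm_eq hp0 hw0 hhpos]
    rw [e1, e2] at HH
    have hMp' : (0:ℝ) < M ^ (1 / p') := Real.rpow_pos_of_pos hMpos _
    have h2 : pnorm w q (fun ω => g (Y ω)) ≤ M / M ^ (1 / p') :=
      (le_div_iff₀ hMp').mpr (by rw [mul_comm]; exact HH)
    have h3 : M / M ^ (1 / p') = M ^ (1 - 1 / p') := by
      rw [Real.rpow_sub hMpos, Real.rpow_one]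
    have h4 : 1 - 1 / p' = 1 / p := by linarith
    rw [h3, h4] at h2
    rw [e3]
    exact h2
end

section
/- Tensorization of hypercontractivity: if (X₁,Y₁) and (X₂,Y₂) are independent pairs of finitely valued random variables, each (p,q)-hypercontractive with 1 ≤ q ≤ p, then ((X₁,X₂),(Y₁,Y₂)) is (p,q)-hypercontractive. -/
open Finset Real

def IsHC {Ω A B : Type*} [Fintype Ω] [DecidableEq A]
    (w : Ω → ℝ) (X : Ω → A) (Y : Ω → B) (p q : ℝ) : Prop :=
  ∀ g : B → ℝ,
    (fexp w (fun ω => |condExpOn w X (fun ωp => g (Y ωp)) ω| ^ p)) ^ (1/p)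
      ≤ (fexp w (fun ω => |g (Y ω)| ^ q)) ^ (1/q)

/-! Under the product weight, conditioning on `(X₁, X₂)` factorizes:
`E[g | X₁, X₂] = E₁[E₂[g | X₂] | X₁]`. Hypercontractivity of the first pair, applied for each
fixed `ω₂`, bounds the `L^p` norm in `ω₁` by an `L^q` norm. Since `q ≤ p`, Minkowski's integral
inequality in `L^(p/q)` lets us exchange the order of the two norms, after which
hypercontractivity of the second pair, applied for each fixed `ω₁`, finishes. -/

section

variable {ι κ : Type*} [Fintype ι] [Fintype κ]

lemma fexp_nonneg {w f : ι → ℝ} (hw : ∀ i, 0 ≤ w i) (hf : ∀ i, 0 ≤ f i) : 0 ≤ fexp w f :=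
  sum_nonneg fun i _ => mul_nonneg (hw i) (hf i)

lemma fexp_mono {w f g : ι → ℝ} (hw : ∀ i, 0 ≤ w i) (hfg : ∀ i, f i ≤ g i) :
    fexp w f ≤ fexp w g :=
  sum_le_sum fun i _ => mul_le_mul_of_nonneg_left (hfg i) (hw i)

lemma fexp_const_mul (w f : ι → ℝ) (c : ℝ) : fexp w (fun i => c * f i) = c * fexp w f := by
  simp only [fexp, mul_sum]
  exact sum_congr rfl fun i _ => by ring

lemma fexp_div_const (w f : ι → ℝ) (c : ℝ) : fexp w (fun i => f i / c) = fexp w f / c := by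
  simp only [fexp, sum_div, mul_div_assoc]

lemma fexp_prod_mul (w₁ : ι → ℝ) (w₂ : κ → ℝ) (f : ι × κ → ℝ) :
    fexp (fun ω : ι × κ => w₁ ω.1 * w₂ ω.2) f
      = fexp w₁ (fun a => fexp w₂ (fun b => f (a, b))) := by
  simp only [fexp, Fintype.sum_prod_type, mul_sum]
  exact sum_congr rfl fun a _ => sum_congr rfl fun b _ => by ring

lemma fexp_prod_mul_swap (w₁ : ι → ℝ) (w₂ : κ → ℝ) (f : ι × κ → ℝ) :
    fexp (fun ω : ι × κ => w₁ ω.1 * w₂ ω.2) f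
      = fexp w₂ (fun b => fexp w₁ (fun a => f (a, b))) := by
  rw [fexp_prod_mul]
  simp only [fexp, mul_sum]
  rw [sum_comm]
  exact sum_congr rfl fun b _ => sum_congr rfl fun a _ => by ring

-- Minkowski's inequality applied to `v i ^ (1 / r) * f i` and `v i ^ (1 / r) * g i`.
lemma fexp_add_rpow_le {v f g : ι → ℝ} {r : ℝ} (hr : 1 ≤ r) (hv : ∀ i, 0 ≤ v i)
    (hf : ∀ i, 0 ≤ f i) (hg : ∀ i, 0 ≤ g i) :
    fexp v (fun i => (f i + g i) ^ r) ^ (1 / r)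
      ≤ fexp v (fun i => f i ^ r) ^ (1 / r) + fexp v (fun i => g i ^ r) ^ (1 / r) := by
  have hr₀ : r ≠ 0 := by positivity
  have hscale : ∀ φ : ι → ℝ, (∀ i, 0 ≤ φ i) →
      fexp v (fun i => φ i ^ r) = ∑ i, (v i ^ (1 / r) * φ i) ^ r := fun φ hφ =>
    sum_congr rfl fun i _ => by
      rw [mul_rpow (rpow_nonneg (hv i) _) (hφ i), ← rpow_mul (hv i), one_div_mul_cancel hr₀,
        rpow_one]
  rw [hscale _ fun i => add_nonneg (hf i) (hg i), hscale f hf, hscale g hg]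
  simp only [mul_add]
  exact Lp_add_le_of_nonneg univ hr (fun i _ => mul_nonneg (rpow_nonneg (hv i) _) (hf i))
    fun i _ => mul_nonneg (rpow_nonneg (hv i) _) (hg i)

lemma fexp_sum_rpow_le {α : Type*} {v : κ → ℝ} {r : ℝ} (hr : 1 ≤ r) (hv : ∀ k, 0 ≤ v k)
    (s : Finset α) {G : α → κ → ℝ} (hG : ∀ i k, 0 ≤ G i k) :
    fexp v (fun k => (∑ i ∈ s, G i k) ^ r) ^ (1 / r)
      ≤ ∑ i ∈ s, fexp v (fun k => G i k ^ r) ^ (1 / r) := by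
  classical
  have hr₀ : 0 < r := by positivity
  induction s using Finset.induction_on with
  | empty => simp [fexp, zero_rpow hr₀.ne', zero_rpow (inv_ne_zero hr₀.ne')]
  | insert a s ha ih =>
    simp only [sum_insert ha]
    exact (fexp_add_rpow_le hr hv (hG a) fun k => sum_nonneg fun i _ => hG i k).trans
      (add_le_add_right ih _)

-- Minkowski's integral inequality for finite weighted sums.
lemma fexp_rpow_fexp_le {u : ι → ℝ} {v : κ → ℝ} {r : ℝ} (hr : 1 ≤ r) (hu : ∀ i, 0 ≤ u i)
    (hv : ∀ k, 0 ≤ v k) {G : ι → κ → ℝ} (hG : ∀ i k, 0 ≤ G i k) :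
    fexp v (fun k => fexp u (fun i => G i k) ^ r) ^ (1 / r)
      ≤ fexp u (fun i => fexp v (fun k => G i k ^ r) ^ (1 / r)) := by
  have hr₀ : r ≠ 0 := by positivity
  refine (fexp_sum_rpow_le hr hv univ fun i k => mul_nonneg (hu i) (hG i k)).trans_eq
    (sum_congr rfl fun i _ => ?_)
  have hGr : 0 ≤ fexp v (fun k => G i k ^ r) := fexp_nonneg hv fun k => rpow_nonneg (hG i k) _
  simp only [mul_rpow (hu i) (hG i _), fexp_const_mul]
  rw [mul_rpow (rpow_nonneg (hu i) _) hGr, ← rpow_mul (hu i), mul_one_div_cancel hr₀, rpow_one]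

lemma condExpOn_eq_div {A : Type*} [DecidableEq A] (w : ι → ℝ) (X : ι → A) (h : ι → ℝ)
    (ω : ι) :
    condExpOn w X h ω = fexp (fun ω' => if X ω' = X ω then w ω' else 0) h
      / fexp (fun ω' => if X ω' = X ω then w ω' else 0) (fun _ => 1) := by
  simp only [condExpOn, fexp, ite_mul, zero_mul, mul_one]

lemma condExpOn_prod {A₁ A₂ : Type*} [DecidableEq A₁] [DecidableEq A₂]
    (w₁ : ι → ℝ) (w₂ : κ → ℝ) (X₁ : ι → A₁) (X₂ : κ → A₂) (h : ι → κ → ℝ) (ω : ι × κ) :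
    condExpOn (fun ω : ι × κ => w₁ ω.1 * w₂ ω.2) (fun ω => (X₁ ω.1, X₂ ω.2))
      (fun ω => h ω.1 ω.2) ω
    = condExpOn w₁ X₁ (fun a => condExpOn w₂ X₂ (h a) ω.2) ω.1 := by
  obtain ⟨ω₁, ω₂⟩ := ω
  set r₁ := fun a => if X₁ a = X₁ ω₁ then w₁ a else 0
  set r₂ := fun b => if X₂ b = X₂ ω₂ then w₂ b else 0
  have hr : (fun ω' : ι × κ =>
        if (X₁ ω'.1, X₂ ω'.2) = (X₁ ω₁, X₂ ω₂) then w₁ ω'.1 * w₂ ω'.2 else 0)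
      = fun ω' => r₁ ω'.1 * r₂ ω'.2 := by
    funext ω'
    simp only [r₁, r₂, Prod.mk.injEq, ite_and]
    split_ifs <;> simp
  have hmass : fexp r₁ (fun _ => fexp r₂ fun _ => 1)
      = fexp r₂ (fun _ => 1) * fexp r₁ (fun _ => 1) := by
    simpa using fexp_const_mul r₁ (fun _ => 1) (fexp r₂ fun _ => 1)
  simp only [condExpOn_eq_div, fexp_div_const]
  rw [hr, fexp_prod_mul, fexp_prod_mul, hmass, div_div]

lemma rpow_one_div_le_rpow_one_div_iff {L R p q : ℝ} (hL : 0 ≤ L) (hR : 0 ≤ R) (hq : 0 < q) :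
    L ^ (1 / p) ≤ R ^ (1 / q) ↔ L ^ (q / p) ≤ R := by
  rw [← rpow_le_rpow_iff (rpow_nonneg hL _) (rpow_nonneg hR _) hq, ← rpow_mul hL, ← rpow_mul hR,
    one_div_mul_eq_div, one_div_mul_cancel hq.ne', rpow_one]

lemma isHC_iff {A B : Type*} [DecidableEq A] {w : ι → ℝ} (hw : ∀ i, 0 ≤ w i) (X : ι → A)
    (Y : ι → B) {p q : ℝ} (hq : 0 < q) :
    IsHC w X Y p q ↔ ∀ g : B → ℝ,
      fexp w (fun i => |condExpOn w X (fun j => g (Y j)) i| ^ p) ^ (q / p)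
        ≤ fexp w (fun i => |g (Y i)| ^ q) :=
  forall_congr' fun _ => rpow_one_div_le_rpow_one_div_iff
    (fexp_nonneg hw fun _ => by positivity) (fexp_nonneg hw fun _ => by positivity) hq

end

theorem hc_tensorize {Ω₁ Ω₂ A₁ B₁ A₂ B₂ : Type*}
    [Fintype Ω₁] [Fintype Ω₂] [DecidableEq A₁] [DecidableEq A₂]
    (w₁ : Ω₁ → ℝ) (w₂ : Ω₂ → ℝ) (h₁ : IsProbWeight w₁) (h₂ : IsProbWeight w₂)
    (X₁ : Ω₁ → A₁) (Y₁ : Ω₁ → B₁) (X₂ : Ω₂ → A₂) (Y₂ : Ω₂ → B₂)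
    (p q : ℝ) (hq : 1 ≤ q) (hqp : q ≤ p)
    (hc₁ : IsHC w₁ X₁ Y₁ p q) (hc₂ : IsHC w₂ X₂ Y₂ p q) :
    IsHC (fun ω : Ω₁ × Ω₂ => w₁ ω.1 * w₂ ω.2)
      (fun ω => (X₁ ω.1, X₂ ω.2)) (fun ω => (Y₁ ω.1, Y₂ ω.2)) p q := by
  have hq₀ : 0 < q := by linarith
  have hp₀ : 0 < p := by linarith
  obtain ⟨hw₁, -⟩ := h₁
  obtain ⟨hw₂, -⟩ := h₂
  rw [isHC_iff hw₁ _ _ hq₀] at hc₁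
  rw [isHC_iff hw₂ _ _ hq₀] at hc₂
  refine (isHC_iff (fun ω : Ω₁ × Ω₂ => mul_nonneg (hw₁ ω.1) (hw₂ ω.2)) _ _ hq₀).mpr fun g => ?_
  set h : Ω₁ → Ω₂ → ℝ := fun a b => condExpOn w₂ X₂ (fun b' => g (Y₁ a, Y₂ b')) b
  have hE : ∀ ω, condExpOn (fun ω : Ω₁ × Ω₂ => w₁ ω.1 * w₂ ω.2) (fun ω => (X₁ ω.1, X₂ ω.2))
      (fun ω => g (Y₁ ω.1, Y₂ ω.2)) ω = condExpOn w₁ X₁ (fun a => h a ω.2) ω.1 :=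
    condExpOn_prod w₁ w₂ X₁ X₂ fun a b => g (Y₁ a, Y₂ b)
  have hc₁_slice : ∀ b, fexp w₁ (fun a => |condExpOn w₁ X₁ (fun a' => h a' b) a| ^ p)
      ≤ fexp w₁ (fun a => |h a b| ^ q) ^ (p / q) := fun b =>
    (rpow_inv_le_iff_of_pos (fexp_nonneg hw₁ fun _ => by positivity)
      (fexp_nonneg hw₁ fun _ => by positivity) (div_pos hp₀ hq₀)).mp
      (by rw [inv_div]; exact hc₁ fun y => condExpOn w₂ X₂ (fun b' => g (y, Y₂ b')) b)
  rw [funext hE, fexp_prod_mul_swap, fexp_prod_mul]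
  calc fexp w₂ (fun b => fexp w₁ fun a => |condExpOn w₁ X₁ (fun a' => h a' b) a| ^ p) ^ (q / p)
      ≤ fexp w₂ (fun b => fexp w₁ (fun a => |h a b| ^ q) ^ (p / q)) ^ (q / p) :=
        rpow_le_rpow (fexp_nonneg hw₂ fun _ => fexp_nonneg hw₁ fun _ => by positivity)
          (fexp_mono hw₂ hc₁_slice) (by positivity)
    _ ≤ fexp w₁ (fun a => fexp w₂ (fun b => (|h a b| ^ q) ^ (p / q)) ^ (q / p)) := by
        simpa only [one_div_div] using fexp_rpow_fexp_le ((one_le_div hq₀).mpr hqp) hw₁ hw₂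
          fun a b => rpow_nonneg (abs_nonneg (h a b)) q
    _ = fexp w₁ (fun a => fexp w₂ (fun b => |h a b| ^ p) ^ (q / p)) := by
        simp only [← rpow_mul (abs_nonneg _), mul_div_cancel₀ p hq₀.ne']
    _ ≤ fexp w₁ (fun a => fexp w₂ (fun b => |g (Y₁ a, Y₂ b)| ^ q)) :=
        fexp_mono hw₁ fun a => hc₂ fun y => g (Y₁ a, y)
end

section
/- For real numbers 0 ≤ r ≤ 1 and x ≥ 0, the inequalities 1 + rx - (x²/2)·r·(1-r) ≤ (1+x)^r ≤ 1 + rx hold. -/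
/-!
The upper bound is Bernoulli's inequality for an exponent in `[0, 1]`. For the lower bound, the
gap `g y = (1 + y) ^ r - (1 + r y - y² r (1 - r) / 2)` vanishes at `0` and has derivative
`r ((1 + y) ^ (r - 1) - (1 - (1 - r) y))`. This is nonnegative by Bernoulli's inequality for
the exponent `r - 1 ∈ [-1, 0]`, obtained from the one for `1 - r` through
`(1 + y) ^ (r - 1) ≥ (1 + (1 - r) y)⁻¹ ≥ 1 - (1 - r) y`. So `g` is monotone and `g x ≥ 0`.
-/

open Real Set

theorem one_sub_mul_le_rpow_one_add_neg {s q : ℝ} (hs : -1 < s) (hq0 : 0 ≤ q) (hq1 : q ≤ 1) :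
    1 - q * s ≤ (1 + s) ^ (-q) := by
  have hbase : 0 < 1 + s := by linarith
  have hbern : (1 + s) ^ q ≤ 1 + q * s := rpow_one_add_le_one_add_mul_self hs.le hq0 hq1
  have hpos : 0 < (1 + s) ^ q := rpow_pos_of_pos hbase q
  have hrecip : 1 - q * s ≤ (1 + q * s)⁻¹ := by
    rw [inv_eq_one_div, le_div_iff₀ (hpos.trans_le hbern)]
    nlinarith [sq_nonneg (q * s)]
  calc 1 - q * s ≤ (1 + q * s)⁻¹ := hrecip
    _ ≤ ((1 + s) ^ q)⁻¹ := inv_anti₀ hpos hbern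
    _ = (1 + s) ^ (-q) := (rpow_neg hbase.le q).symm

theorem hasDerivAt_rpow_one_add_sub_taylor (r : ℝ) {y : ℝ} (hy : -1 < y) :
    HasDerivAt (fun y : ℝ => (1 + y) ^ r - (1 + r * y - y ^ 2 / 2 * r * (1 - r)))
      (r * ((1 + y) ^ (r - 1) - (1 - (1 - r) * y))) y := by
  have hpow : HasDerivAt (fun y : ℝ => (1 + y) ^ r) (r * (1 + y) ^ (r - 1)) y := by
    have hbase : 1 + y ≠ 0 := (by linarith : (0 : ℝ) < 1 + y).ne'
    simpa using ((hasDerivAt_id y).const_add 1).rpow_const (p := r) (Or.inl hbase)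
  have hpoly : HasDerivAt (fun y : ℝ => 1 + r * y - y ^ 2 / 2 * r * (1 - r))
      (r - y * r * (1 - r)) y := by
    refine (((hasDerivAt_id y).const_mul r |>.const_add 1).sub
      (((((hasDerivAt_id y).pow 2).div_const 2).mul_const r).mul_const (1 - r))).congr_deriv ?_
    simp only [id]
    ring
  exact (hpow.sub hpoly).congr_deriv (by ring)

theorem monotoneOn_rpow_one_add_sub_taylor {r : ℝ} (hr0 : 0 ≤ r) (hr1 : r ≤ 1) :
    MonotoneOn (fun y : ℝ => (1 + y) ^ r - (1 + r * y - y ^ 2 / 2 * r * (1 - r))) (Ioi (-1)) := by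
  have hderiv : ∀ y ∈ Ioi (-1 : ℝ), HasDerivAt _ _ y :=
    fun y hy => hasDerivAt_rpow_one_add_sub_taylor r (mem_Ioi.mp hy)
  refine monotoneOn_of_hasDerivWithinAt_nonneg (convex_Ioi _)
    (fun y hy => (hderiv y hy).continuousAt.continuousWithinAt)
    (fun y hy => (hderiv y (interior_subset hy)).hasDerivWithinAt) fun y hy => ?_
  rw [interior_Ioi] at hy
  have hbern := one_sub_mul_le_rpow_one_add_neg (mem_Ioi.mp hy) (sub_nonneg.mpr hr1)
    (sub_le_self 1 hr0)
  rw [neg_sub] at hbern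
  exact mul_nonneg hr0 (sub_nonneg.mpr hbern)

theorem rpow_taylor_bounds (r x : ℝ) (hr0 : 0 ≤ r) (hr1 : r ≤ 1) (hx : 0 ≤ x) :
    1 + r * x - x^2 / 2 * r * (1 - r) ≤ (1 + x) ^ r ∧ (1 + x) ^ r ≤ 1 + r * x := by
  refine ⟨?_, rpow_one_add_le_one_add_mul_self (by linarith) hr0 hr1⟩
  have hmono := monotoneOn_rpow_one_add_sub_taylor hr0 hr1
    (by norm_num : (0 : ℝ) ∈ Ioi (-1)) (by simp only [mem_Ioi]; linarith) hx
  norm_num at hmono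
  linarith
end

section
/- For the DSBS triple (X,Y,Z) ~ DSBStriple(ε_X, ε_Y, ε_Z) (with parameters in [0, 1/2) satisfying the triangle inequalities), the maximal correlation of X with the pair (Y,Z) satisfies ρ_m(X; (Y,Z)) = √( (ε_Y - ε_Z)²/ε_X + (1 - ε_Y - ε_Z)²/(1 - ε_X) ), assuming 0 < ε_X. -/
open Finset Real

noncomputable def dsbsTriple (eX eY eZ : ℝ) : Bool × Bool × Bool → ℝ :=
  fun t =>
    if t.1 = t.2.1 ∧ t.2.1 = t.2.2 then (2 - eX - eY - eZ) / 4
    else if t.1 = t.2.1 then (eX + eY - eZ) / 4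
    else if t.1 = t.2.2 then (eX - eY + eZ) / 4
    else (-eX + eY + eZ) / 4

lemma aux_corr_bound (S ρ c0 : ℝ) (hρ0 : 0 < ρ) (hf1 : c0^2 ≤ 1) (hS2 : S^2 ≤ ρ^2) :
    -(c0 * S) ≤ ρ := by
  nlinarith [sq_nonneg (ρ + c0 * S), mul_nonneg (by linarith : (0:ℝ) ≤ 1 - c0^2) (sq_nonneg S)]

set_option maxHeartbeats 1600000 in
theorem dsbsTriple_maxCorr (eX eY eZ : ℝ) (h0X : 0 < eX) (h0Y : 0 ≤ eY) (h0Z : 0 ≤ eZ)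
    (hX : eX < 1/2) (hY : eY < 1/2) (hZ : eZ < 1/2)
    (t1 : eZ ≤ eX + eY) (t2 : eY ≤ eX + eZ) (t3 : eX ≤ eY + eZ) :
    maxCorr (dsbsTriple eX eY eZ) (fun t => t.1) (fun t => t.2)
      = Real.sqrt ((eY - eZ)^2 / eX + (1 - eY - eZ)^2 / (1 - eX)) := by
  have hu : 0 < 1 - eX := by linarith
  have hm0 : 0 < 1 - eY - eZ := by linarith
  set A := (eY - eZ)^2 / eX + (1 - eY - eZ)^2 / (1 - eX) with hA
  have hA0 : 0 < A := by
    rw [hA]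
    have h1 : 0 ≤ (eY - eZ)^2 / eX := by positivity
    have h2 : 0 < (1 - eY - eZ)^2 / (1 - eX) := by positivity
    linarith
  set ρ := Real.sqrt A with hρdef
  have hρ0 : 0 < ρ := Real.sqrt_pos.mpr hA0
  have hρ2 : ρ^2 = A := Real.sq_sqrt hA0.le
  have hApoly : ρ^2 * (eX * (1 - eX)) = (eY - eZ)^2 * (1 - eX) + (1 - eY - eZ)^2 * eX := by
    rw [hρ2, hA]; field_simp
  clear hρdef
  clear_value A ρ
  have hbound : ∀ r ∈ { r : ℝ | ∃ f : Bool → ℝ, ∃ g : Bool × Bool → ℝ,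
      fexp (dsbsTriple eX eY eZ) (fun ω => f ω.1) = 0 ∧
      fexp (dsbsTriple eX eY eZ) (fun ω => g ω.2) = 0 ∧
      fexp (dsbsTriple eX eY eZ) (fun ω => (f ω.1)^2) ≤ 1 ∧
      fexp (dsbsTriple eX eY eZ) (fun ω => (g ω.2)^2) ≤ 1 ∧
      r = fexp (dsbsTriple eX eY eZ) (fun ω => f ω.1 * g ω.2) }, r ≤ ρ := by
    rintro r ⟨f, g, hf0, hg0, hf2, hg2, rfl⟩
    simp only [fexp, dsbsTriple, Fintype.sum_prod_type, Fintype.sum_bool] at hf0 hg0 hf2 hg2 ⊢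
    simp only [Bool.true_eq_false, Bool.false_eq_true] at hf0 hg0 hf2 hg2 ⊢
    simp only [if_true, if_false, and_self, and_true, true_and, false_and, and_false,
      if_neg, reduceIte] at hf0 hg0 hf2 hg2 ⊢
    have hft : f true = - f false := by linear_combination 2 * hf0
    have hfsq : f true ^ 2 = f false ^ 2 := by rw [hft]; ring
    have hf1 : f false ^ 2 ≤ 1 := by linarith
    have hQ : (1-eX)/2*(g (false,false)^2 + g (true,true)^2)
        + eX/2*(g (false,true)^2 + g (true,false)^2) ≤ 1 := by linarith
    have hC0 : 0 ≤ (eY-eZ)^2*(1-eX) + (1-eY-eZ)^2*eX := by positivity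
    have hCS : (((1-eY-eZ)*(g (true,true) - g (false,false))
          + (eY-eZ)*(g (true,false) - g (false,true)))/2)^2 * (eX*(1-eX))
        ≤ ((eY-eZ)^2*(1-eX) + (1-eY-eZ)^2*eX) *
          ((1-eX)/2*(g (false,false)^2 + g (true,true)^2)
            + eX/2*(g (false,true)^2 + g (true,false)^2)) := by
      linarith [sq_nonneg ((eY-eZ)*(1-eX)*(g (true,true) - g (false,false))
            - (1-eY-eZ)*eX*(g (true,false) - g (false,true))),
        mul_nonneg (mul_nonneg (sq_nonneg (eY-eZ)) (sq_nonneg (1-eX)))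
          (sq_nonneg (g (false,false) + g (true,true))),
        mul_nonneg (mul_nonneg (sq_nonneg (eY-eZ)) (mul_pos hu h0X).le)
          (sq_nonneg (g (false,true) + g (true,false))),
        mul_nonneg (mul_nonneg (sq_nonneg (1-eY-eZ)) (mul_pos hu h0X).le)
          (sq_nonneg (g (false,false) + g (true,true))),
        mul_nonneg (mul_nonneg (sq_nonneg (1-eY-eZ)) (sq_nonneg eX))
          (sq_nonneg (g (false,true) + g (true,false)))]
    have hS2 : (((1-eY-eZ)*(g (true,true) - g (false,false))
          + (eY-eZ)*(g (true,false) - g (false,true)))/2)^2 ≤ ρ^2 := by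
      have h1 := mul_le_mul_of_nonneg_left hQ hC0
      have h2 : (((1-eY-eZ)*(g (true,true) - g (false,false))
            + (eY-eZ)*(g (true,false) - g (false,true)))/2)^2 * (eX*(1-eX))
          ≤ ρ^2 * (eX*(1-eX)) := by rw [hApoly]; linarith
      exact le_of_mul_le_mul_right h2 (mul_pos h0X hu)
    rw [hft]
    linarith [aux_corr_bound (((1-eY-eZ)*(g (true,true) - g (false,false))
          + (eY-eZ)*(g (true,false) - g (false,true)))/2) ρ (f false) hρ0 hf1 hS2]
  rw [maxCorr]
  apply le_antisymm
  · exact Real.sSup_le hbound hρ0.le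
  · apply le_csSup ⟨ρ, hbound⟩
    refine ⟨fun x => if x then 1 else -1,
      fun p => if p.1 = p.2 then (if p.1 then (1-eY-eZ)/((1-eX)*ρ) else -((1-eY-eZ)/((1-eX)*ρ)))
        else (if p.1 then (eY-eZ)/(eX*ρ) else -((eY-eZ)/(eX*ρ))), ?_, ?_, ?_, ?_, ?_⟩ <;>
      simp only [fexp, dsbsTriple, Fintype.sum_prod_type, Fintype.sum_bool, Bool.true_eq_false,
        Bool.false_eq_true, if_true, if_false, and_self, true_and, and_true, false_and,
        and_false, reduceIte]
    · ring
    · field_simp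
      ring
    · linarith
    · refine le_of_eq ?_
      have h1A : (1:ℝ) = A / ρ^2 := by
        rw [← hρ2]; exact (div_self (pow_ne_zero 2 hρ0.ne')).symm
      conv_rhs => rw [h1A, hA]
      field_simp
      ring
    · have hρA : ρ = ((eY - eZ)^2 / eX + (1 - eY - eZ)^2 / (1 - eX)) / ρ := by
        rw [← hA, ← hρ2, sq, mul_div_assoc, div_self hρ0.ne', mul_one]
      conv_lhs => rw [hρA]
      field_simp
      ring
end

section
/- Strict inequality between maximal correlations in the DSBS triple example: for 0 < ε < 1/2, if (X,Y,Z) ~ DSBStriple(ε,ε,ε) and (U,V,W) ~ DSBStriple(ε, 2ε(1-ε), ε), then ρ_m((X,Z); Y) = (1-2ε)/√(1-ε) < (1-2ε)/√(1-2ε+2ε²) = ρ_m((U,W); V). -/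
open Finset Real

set_option maxHeartbeats 1600000

lemma maxCorr_dsbs (ε η : ℝ) (hε : ε ≤ 1/2) (hη0 : 0 ≤ η) (hη1 : η < 1) :
    maxCorr (dsbsTriple ε η ε) (fun t => (t.1, t.2.2)) (fun t => t.2.1)
      = (1 - 2*ε) / Real.sqrt (1 - η) := by
  have hne : (1:ℝ) - η ≠ 0 := by linarith
  have hs : 0 < Real.sqrt (1 - η) := Real.sqrt_pos.2 (by linarith)
  have hs2 : (Real.sqrt (1 - η))^2 = 1 - η := Real.sq_sqrt (by linarith)
  set s := Real.sqrt (1 - η) with hs_def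
  clear_value s
  apply IsGreatest.csSup_eq
  constructor
  · refine ⟨(fun p => if p.1 = p.2 then (if p.1 = false then 1/s else -(1/s)) else 0),
      (fun y => if y = false then 1 else -1), ?_, ?_, ?_, ?_, ?_⟩
    · simp [fexp, dsbsTriple, Fintype.sum_prod_type]
      ring
    · simp [fexp, dsbsTriple, Fintype.sum_prod_type]
      ring
    · simp only [fexp, dsbsTriple, Fintype.sum_prod_type]
      simp
      rw [hs2]
      apply le_of_eq
      field_simp
      ring
    · simp [fexp, dsbsTriple, Fintype.sum_prod_type]
      linarith
    · simp [fexp, dsbsTriple, Fintype.sum_prod_type]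
      field_simp
      ring
  · rintro r ⟨f, g, hf0, hg0, hf2, hg2, hr⟩
    simp only [fexp, dsbsTriple, Fintype.sum_prod_type, Fintype.sum_bool] at hf0 hg0 hf2 hg2 hr
    set a := f (false, false) with ha
    set b := f (false, true) with hb
    set c := f (true, false) with hc
    set d := f (true, true) with hd
    set u := g false with hu
    set v := g true with hv
    clear_value a b c d u v
    simp at hf0 hg0 hf2 hg2 hr
    ring_nf at hf0 hg0 hf2 hg2 hr
    have huv : v = -u := by linarith
    have hr2 : r = (1 - 2*ε)/2 * (u*(a-d)) := by rw [hr, huv]; ring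
    have hu2 : u^2 ≤ 1 := by rw [huv] at hg2; nlinarith [hg2]
    clear hr hf0 hg0 huv hg2
    have had : s^2 * (a^2 + d^2) ≤ 2 := by
      rw [hs2]
      nlinarith [mul_nonneg hη0 (sq_nonneg b), mul_nonneg hη0 (sq_nonneg c), hf2]
    have key : u*(a-d) ≤ 2/s := by
      rw [le_div_iff₀ hs]
      nlinarith [sq_nonneg (s*a - u), sq_nonneg (s*d + u), had, hu2]
    calc r = (1 - 2*ε)/2 * (u*(a-d)) := hr2
      _ ≤ (1 - 2*ε)/2 * (2/s) := by
          apply mul_le_mul_of_nonneg_left key (by linarith)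
      _ = (1 - 2*ε)/s := by ring

theorem dsbsTriple_example (ε : ℝ) (h0 : 0 < ε) (h1 : ε < 1/2) :
    maxCorr (dsbsTriple ε ε ε) (fun t => (t.1, t.2.2)) (fun t => t.2.1)
        = (1 - 2*ε) / Real.sqrt (1 - ε) ∧
    (1 - 2*ε) / Real.sqrt (1 - ε) < (1 - 2*ε) / Real.sqrt (1 - 2*ε + 2*ε^2) ∧
    maxCorr (dsbsTriple ε (2*ε*(1-ε)) ε) (fun t => (t.1, t.2.2)) (fun t => t.2.1)
        = (1 - 2*ε) / Real.sqrt (1 - 2*ε + 2*ε^2) := by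
  have hq0 : (0:ℝ) < 1 - 2*ε + 2*ε^2 := by nlinarith [sq_nonneg (1 - 2*ε)]
  refine ⟨maxCorr_dsbs ε ε h1.le h0.le (by linarith), ?_, ?_⟩
  · apply div_lt_div_of_pos_left (by linarith) (Real.sqrt_pos.2 hq0)
    apply Real.sqrt_lt_sqrt hq0.le
    nlinarith
  · have h2 : 1 - 2*ε*(1-ε) = 1 - 2*ε + 2*ε^2 := by ring
    rw [← h2]
    exact maxCorr_dsbs ε (2*ε*(1-ε)) h1.le (by nlinarith) (by nlinarith)
end
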